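/- arXiv:2211.02338 — 6 statements merged into one kernel-verified Lean document; each statement's English description precedes it below -/
import Mathlib

section
/- For every odd integer n ≥ 1, the Ramsey number R(K_{1,n}, F_n) equals 3n; that is, every red-blue edge-coloring of the complete graph on 3n vertices contains a red copy of the star K_{1,n} or a blue copy of the fan F_n, and 3n is the smallest integer with this property. -/
/-- The fan `F n = K₁ + n·K₂`: vertex 0 is the center, and vertices
`2k+1, 2k+2` form the `k`-th edge of the matching, for `k < n`. -/
def fanGraph (n : ℕ) : SimpleGraph (Fin (2 * n + 1)) where
  Adj v w := v ≠ w ∧ (v = 0 ∨ w = 0 ∨ (v.val - 1) / 2 = (w.val - 1) / 2)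
  symm := by
    constructor
    intro v w h
    obtain ⟨h1, h2⟩ := h
    refine ⟨h1.symm, ?_⟩
    tauto
  loopless := by constructor; intro v h; exact h.1 rfl

/-- `ContainsCopy G H` : `G` contains a subgraph isomorphic to `H`
(an injective map of vertices sending edges of `H` to edges of `G`). -/
def ContainsCopy {α β : Type*} (G : SimpleGraph α) (H : SimpleGraph β) : Prop :=
  ∃ f : β ↪ α, ∀ ⦃a b : β⦄, H.Adj a b → G.Adj (f a) (f b)

/-- The star `K_{1,n}`: vertex 0 is the center. -/
def starGraph (n : ℕ) : SimpleGraph (Fin (n + 1)) where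
  Adj v w := v ≠ w ∧ (v = 0 ∨ w = 0)
  symm := by constructor; intro v w h; exact ⟨h.1.symm, h.2.symm⟩
  loopless := by constructor; intro v h; exact h.1 rfl
/-!
Upper bound: if some vertex has red degree at least `n` it is the center of a red star.
Otherwise every vertex `v` has at least `3n - 1 - (n - 1) = 2n` blue neighbors, and inside this
blue neighborhood every vertex misses at most `n - 1` blue edges. A maximum blue matching there
has `n` edges: otherwise two unmatched vertices `u, w` are red to each other and to few matched
vertices, so some matching edge `ab` has `ua` and `wb` blue, and `ua, wb` replaces `ab`.
The matching together with `v` is a blue fan.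

Lower bound: for `n = 2m + 1` and `N < 3n`, color red the pairs of `ℤ/N` at cyclic distance at
most `m`. Every red degree is at most `2m < n` and every blue degree at most `N - 2m - 1 < 2n`,
while `K_{1,n}` and `F_n` have a vertex of degree `n` and `2n` respectively.
-/

open Finset
open SimpleGraph hiding starGraph

variable {V : Type*}

lemma containsCopy_of_cons {G : SimpleGraph V} {k : ℕ} {H : SimpleGraph (Fin (k + 1))}
    (v : V) (g : Fin k ↪ V) (hv : ∀ i, G.Adj v (g i))
    (hg : ∀ i j, H.Adj i.succ j.succ → G.Adj (g i) (g j)) : ContainsCopy G H := by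
  refine ⟨⟨Fin.cons v g, Fin.cons_injective_iff.mpr
    ⟨fun ⟨i, hi⟩ => (hv i).ne hi.symm, g.injective⟩⟩, ?_⟩
  intro a b hab
  cases a using Fin.cases <;> cases b using Fin.cases
  · exact absurd hab (H.loopless.irrefl _)
  · exact hv _
  · exact (hv _).symm
  · exact hg _ _ hab

lemma ContainsCopy.exists_le_degree [Fintype V] {G : SimpleGraph V} [DecidableRel G.Adj] {k : ℕ}
    {H : SimpleGraph (Fin (k + 1))} (h : ContainsCopy G H) (hH : ∀ i : Fin k, H.Adj 0 i.succ) :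
    ∃ v, k ≤ G.degree v := by
  obtain ⟨f, hf⟩ := h
  refine ⟨f 0, ?_⟩
  calc k = #(univ.map ((Fin.succEmb k).trans f)) := by simp
    _ ≤ G.degree (f 0) := by
      rw [← card_neighborFinset_eq_degree]
      refine card_le_card fun x hx => ?_
      obtain ⟨i, -, rfl⟩ := mem_map.mp hx
      exact (mem_neighborFinset _ _ _).mpr (hf (hH i))

lemma starGraph_adj_zero_succ {n : ℕ} (i : Fin n) : (starGraph n).Adj 0 i.succ :=
  ⟨(Fin.succ_ne_zero i).symm, Or.inl rfl⟩

lemma fanGraph_adj_zero_succ {n : ℕ} (i : Fin (2 * n)) : (fanGraph n).Adj 0 i.succ :=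
  ⟨(Fin.succ_ne_zero i).symm, Or.inl rfl⟩

lemma fanGraph_adj_succ_succ {n : ℕ} {i j : Fin (2 * n)} (h : (fanGraph n).Adj i.succ j.succ) :
    i ≠ j ∧ i.val / 2 = j.val / 2 := by
  obtain ⟨hne, h0 | h0 | hdiv⟩ := h
  · exact absurd h0 (Fin.succ_ne_zero i)
  · exact absurd h0 (Fin.succ_ne_zero j)
  · exact ⟨fun h => hne (h ▸ rfl), by simpa using hdiv⟩

lemma containsCopy_starGraph {G : SimpleGraph V} [Fintype V] [DecidableRel G.Adj] {n : ℕ} {v : V}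
    (hv : n ≤ G.degree v) : ContainsCopy G (starGraph n) := by
  rw [← card_neighborFinset_eq_degree] at hv
  let g : Fin n ↪ V := (Fin.castLEEmb hv).trans
    ((G.neighborFinset v).equivFin.symm.toEmbedding.trans (Function.Embedding.subtype _))
  refine containsCopy_of_cons v g (fun i => (mem_neighborFinset _ _ _).mp (Subtype.prop _)) ?_
  rintro i j ⟨-, h | h⟩ <;> exact absurd h (Fin.succ_ne_zero _)

lemma containsCopy_fanGraph {G : SimpleGraph V} {n : ℕ} (v : V) (g : Fin n × Fin 2 ↪ V)
    (hv : ∀ x, G.Adj v (g x)) (hg : ∀ k, G.Adj (g (k, 0)) (g (k, 1))) :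
    ContainsCopy G (fanGraph n) := by
  have hpair : ∀ k (a b : Fin 2), a ≠ b → G.Adj (g (k, a)) (g (k, b)) := by
    intro k a b hab
    fin_cases a <;> fin_cases b
    exacts [absurd rfl hab, hg k, (hg k).symm, absurd rfl hab]
  -- vertex `i + 1` of the fan is the `i % 2`-th end of the `i / 2`-th matching edge
  let idx : Fin (2 * n) → Fin n × Fin 2 := fun i => (⟨i / 2, by omega⟩, ⟨i % 2, by omega⟩)
  have hidx : Function.Injective idx := fun i j h => by
    simp only [idx, Prod.mk.injEq, Fin.mk.injEq] at h
    exact Fin.ext (by omega)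
  refine containsCopy_of_cons v ⟨g ∘ idx, g.injective.comp hidx⟩ (fun i => hv _)
    fun i j hij => ?_
  obtain ⟨hne, hdiv⟩ := fanGraph_adj_succ_succ hij
  have hk : (⟨i / 2, by omega⟩ : Fin n) = ⟨j / 2, by omega⟩ := Fin.ext hdiv
  simp only [Function.Embedding.coeFn_mk, Function.comp_apply, idx, hk]
  exact hpair _ _ _ fun h => hne (Fin.ext (by have := Fin.mk.inj_iff.mp h; omega))

section PairMatching

variable [DecidableEq V] {G : SimpleGraph V} {M : Finset (V × V)}

/-- A matching of `G` whose edges are recorded as ordered pairs. -/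
def IsPairMatching (G : SimpleGraph V) (M : Finset (V × V)) : Prop :=
  (∀ e ∈ M, G.Adj e.1 e.2) ∧
    (M : Set (V × V)).PairwiseDisjoint fun e => ({e.1, e.2} : Finset V)

def pairVerts (M : Finset (V × V)) : Finset V := M.biUnion fun e => {e.1, e.2}

lemma mem_pairVerts_of_mem {e : V × V} (he : e ∈ M) {x : V} (hx : x = e.1 ∨ x = e.2) :
    x ∈ pairVerts M :=
  mem_biUnion.mpr ⟨e, he, by simpa using hx⟩

lemma pairVerts_insert (e : V × V) (M : Finset (V × V)) :
    pairVerts (insert e M) = {e.1, e.2} ∪ pairVerts M :=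
  biUnion_insert

lemma pairVerts_mono {M' : Finset (V × V)} (h : M' ⊆ M) : pairVerts M' ⊆ pairVerts M :=
  biUnion_subset_biUnion_of_subset_left _ h

lemma IsPairMatching.card_pairVerts (hM : IsPairMatching G M) : #(pairVerts M) = 2 * #M := by
  rw [pairVerts, card_biUnion hM.2, sum_congr rfl fun e he => card_pair (hM.1 e he).ne,
    sum_const, smul_eq_mul, mul_comm]

lemma IsPairMatching.card_filter_pairVerts_adj {R : SimpleGraph V} [DecidableRel R.Adj]
    (hM : IsPairMatching Rᶜ M) (x : V) :
    #{y ∈ pairVerts M | R.Adj x y} =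
      ∑ e ∈ M, ((if R.Adj x e.1 then 1 else 0) + if R.Adj x e.2 then 1 else 0) := by
  rw [card_filter, pairVerts, sum_biUnion hM.2]
  exact sum_congr rfl fun e he => sum_pair (hM.1 e he).ne

lemma IsPairMatching.subset (hM : IsPairMatching G M) {M' : Finset (V × V)} (h : M' ⊆ M) :
    IsPairMatching G M' :=
  ⟨fun e he => hM.1 e (h he), hM.2.subset (by simpa using h)⟩

lemma IsPairMatching.notMem_pairVerts_erase (hM : IsPairMatching G M) {e : V × V} (he : e ∈ M)
    {x : V} (hx : x = e.1 ∨ x = e.2) : x ∉ pairVerts (M.erase e) := by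
  intro h
  obtain ⟨f, hf, hxf⟩ := mem_biUnion.mp h
  have hdisj := hM.2 he (mem_of_mem_erase hf) (ne_of_mem_erase hf).symm
  exact disjoint_left.mp hdisj (by simpa using hx) hxf

lemma IsPairMatching.insert (hM : IsPairMatching G M) {u w : V} (hu : u ∉ pairVerts M)
    (hw : w ∉ pairVerts M) (huw : G.Adj u w) :
    IsPairMatching G (insert (u, w) M) ∧ #(insert (u, w) M) = #M + 1 := by
  have hnot : (u, w) ∉ M := fun h => hu (mem_pairVerts_of_mem h (Or.inl rfl))
  refine ⟨⟨?_, ?_⟩, card_insert_of_notMem hnot⟩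
  · intro e he
    rcases mem_insert.mp he with rfl | he
    exacts [huw, hM.1 e he]
  · rw [coe_insert]
    refine hM.2.insert fun f hf _ => disjoint_left.mpr fun x hx hxf => ?_
    have hxM : x ∈ pairVerts M := mem_biUnion.mpr ⟨f, hf, hxf⟩
    rcases mem_insert.mp hx with rfl | hx
    · exact hu hxM
    · rw [mem_singleton.mp hx] at hxM
      exact hw hxM

lemma IsPairMatching.exists_augment_edge (hM : IsPairMatching G M) {u w : V}
    (hu : u ∉ pairVerts M) (hw : w ∉ pairVerts M) (huw : G.Adj u w) :
    ∃ M', IsPairMatching G M' ∧ #M' = #M + 1 ∧ pairVerts M' ⊆ {u, w} ∪ pairVerts M :=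
  let h := hM.insert hu hw huw
  ⟨_, h.1, h.2, (pairVerts_insert _ _).le⟩

lemma IsPairMatching.exists_augment_path (hM : IsPairMatching G M) {e : V × V} (he : e ∈ M)
    {u w : V} (hu : u ∉ pairVerts M) (hw : w ∉ pairVerts M) (huw : u ≠ w)
    (hu1 : G.Adj u e.1) (hw2 : G.Adj w e.2) :
    ∃ M', IsPairMatching G M' ∧ #M' = #M + 1 ∧ pairVerts M' ⊆ {u, w} ∪ pairVerts M := by
  have hsub : pairVerts (M.erase e) ⊆ pairVerts M := pairVerts_mono (erase_subset e M)
  have h₁ := (hM.subset (erase_subset e M)).insert (fun h => hw (hsub h))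
    (hM.notMem_pairVerts_erase he (Or.inr rfl)) hw2
  have h₂ := h₁.1.insert (u := u) (w := e.1)
    (by
      rw [pairVerts_insert]
      simp only [mem_union, mem_insert, mem_singleton, not_or]
      exact ⟨⟨huw, fun h => hu (mem_pairVerts_of_mem he (Or.inr h))⟩, fun h => hu (hsub h)⟩)
    (by
      rw [pairVerts_insert]
      simp only [mem_union, mem_insert, mem_singleton, not_or]
      exact ⟨⟨fun h => hw (mem_pairVerts_of_mem he (Or.inl h.symm)), (hM.1 e he).ne⟩,
        hM.notMem_pairVerts_erase he (Or.inl rfl)⟩)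
    hu1
  refine ⟨_, h₂.1, ?_, ?_⟩
  · rw [h₂.2, h₁.2, card_erase_of_mem he]
    have := card_pos.mpr ⟨e, he⟩
    omega
  · intro x hx
    simp only [pairVerts_insert, mem_union, mem_insert, mem_singleton] at hx ⊢
    rcases hx with (rfl | rfl) | (rfl | rfl) | hx
    · exact Or.inl (Or.inl rfl)
    · exact Or.inr (mem_pairVerts_of_mem he (Or.inl rfl))
    · exact Or.inl (Or.inr rfl)
    · exact Or.inr (mem_pairVerts_of_mem he (Or.inr rfl))
    · exact Or.inr (hsub hx)

lemma IsPairMatching.exists_embedding (hM : IsPairMatching G M) :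
    ∃ g : Fin #M × Fin 2 ↪ V, (∀ k, G.Adj (g (k, 0)) (g (k, 1))) ∧ ∀ x, g x ∈ pairVerts M := by
  let e : Fin #M → V × V := fun k => (M.equivFin.symm k).1
  have he : ∀ k, e k ∈ M := fun k => (M.equivFin.symm k).2
  let g : Fin #M × Fin 2 → V := fun x => ![(e x.1).1, (e x.1).2] x.2
  have hg : ∀ x, g x = (e x.1).1 ∨ g x = (e x.1).2 := by
    rintro ⟨k, i⟩
    fin_cases i <;> simp [g]
  have hinj : Function.Injective g := by
    rintro ⟨k, i⟩ ⟨l, j⟩ h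
    obtain rfl : k = l := by
      by_contra hkl
      have hne : e k ≠ e l := fun h' => hkl (M.equivFin.symm.injective (Subtype.ext h'))
      have hk : g (k, i) ∈ ({(e k).1, (e k).2} : Finset V) := by simpa using hg (k, i)
      have hl : g (k, i) ∈ ({(e l).1, (e l).2} : Finset V) := by rw [h]; simpa using hg (l, j)
      exact disjoint_left.mp (hM.2 (he k) (he l) hne) hk hl
    have := (hM.1 _ (he k)).ne
    fin_cases i <;> fin_cases j <;> simp_all [g]
  exact ⟨⟨g, hinj⟩, fun k => hM.1 _ (he k), fun x => mem_pairVerts_of_mem (he x.1) (hg x)⟩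

end PairMatching

section BoundedDegree

variable [Fintype V] [DecidableEq V] {R : SimpleGraph V} [DecidableRel R.Adj] {n : ℕ}

lemma card_sub_one_add_card_filter_adj_le_degree {U P : Finset V} (hUP : Disjoint U P) {x : V}
    (hx : x ∈ U) (hUx : ∀ y ∈ U, ¬ Rᶜ.Adj x y) :
    #U - 1 + #{y ∈ P | R.Adj x y} ≤ R.degree x := by
  have hsub : U.erase x ∪ {y ∈ P | R.Adj x y} ⊆ R.neighborFinset x := by
    intro y hy
    rw [mem_neighborFinset]
    rcases mem_union.mp hy with hy | hy
    · by_contra h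
      exact hUx y (mem_of_mem_erase hy) ((compl_adj _ _ _).mpr ⟨(ne_of_mem_erase hy).symm, h⟩)
    · exact (mem_filter.mp hy).2
  have hdisj : Disjoint (U.erase x) {y ∈ P | R.Adj x y} :=
    (disjoint_of_subset_left (erase_subset x U) hUP).mono_right (filter_subset _ _)
  rw [← card_erase_of_mem hx, ← card_union_of_disjoint hdisj, ← card_neighborFinset_eq_degree]
  exact card_le_card hsub

lemma IsPairMatching.exists_augment_path_compl {M : Finset (V × V)} (hdeg : ∀ x, R.degree x < n)
    (hM : IsPairMatching Rᶜ M) (hMn : #M < n) {U : Finset V} (hUM : Disjoint U (pairVerts M))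
    (hU : 2 * n ≤ #U + 2 * #M) (hUind : ∀ x ∈ U, ∀ y ∈ U, ¬ Rᶜ.Adj x y) {u w : V}
    (hu : u ∈ U) (hw : w ∈ U) :
    ∃ e ∈ M, (Rᶜ.Adj u e.1 ∧ Rᶜ.Adj w e.2) ∨ (Rᶜ.Adj u e.2 ∧ Rᶜ.Adj w e.1) := by
  set c : V → V × V → ℕ := fun x e =>
    (if R.Adj x e.1 then 1 else 0) + if R.Adj x e.2 then 1 else 0
  -- an unmatched vertex is red to all other unmatched vertices, so few of its red edges hit `M`
  have hred : ∀ x ∈ U, ∑ e ∈ M, c x e < #M := by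
    intro x hx
    have hx' := (card_sub_one_add_card_filter_adj_le_degree hUM hx (hUind x hx)).trans_lt
      (hdeg x)
    rw [hM.card_filter_pairVerts_adj x] at hx'
    have := card_pos.mpr ⟨x, hx⟩
    have := Nat.succ_le_of_lt hMn
    simp only [c]
    omega
  have hsum : ∑ e ∈ M, (c u e + c w e) < ∑ e ∈ M, 2 := by
    rw [sum_add_distrib, sum_const, smul_eq_mul]
    have := hred u hu
    have := hred w hw
    omega
  obtain ⟨e, he, hce⟩ := exists_lt_of_sum_lt hsum
  have hout : ∀ x ∈ U, x ≠ e.1 ∧ x ≠ e.2 := fun x hx =>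
    ⟨fun h => disjoint_left.mp hUM hx (mem_pairVerts_of_mem he (Or.inl h)),
      fun h => disjoint_left.mp hUM hx (mem_pairVerts_of_mem he (Or.inr h))⟩
  refine ⟨e, he, ?_⟩
  simp only [compl_adj, hout u hu, hout w hw, ne_eq, not_false_eq_true, true_and]
  simp only [c] at hce
  split_ifs at hce <;> tauto

lemma exists_isPairMatching_compl (hdeg : ∀ x, R.degree x < n) {T : Finset V}
    (hT : 2 * n ≤ #T) : ∃ M, IsPairMatching Rᶜ M ∧ pairVerts M ⊆ T ∧ #M = n := by
  suffices ∀ k ≤ n, ∃ M, IsPairMatching Rᶜ M ∧ pairVerts M ⊆ T ∧ #M = k from this n le_rfl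
  intro k
  induction k with
  | zero => exact fun _ => ⟨∅, ⟨by simp, by simp⟩, by simp [pairVerts], card_empty⟩
  | succ k ih =>
    intro hk
    obtain ⟨M, hM, hMT, rfl⟩ := ih (by omega)
    set U := T \ pairVerts M
    have hUM : Disjoint U (pairVerts M) := sdiff_disjoint
    have hU : #U = #T - 2 * #M := by rw [card_sdiff_of_subset hMT, hM.card_pairVerts]
    have hnot : ∀ x ∈ U, x ∉ pairVerts M := fun x hx => disjoint_left.mp hUM hx
    have hUT : ∀ {x y}, x ∈ U → y ∈ U → {x, y} ∪ pairVerts M ⊆ T := fun hx hy =>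
      union_subset
        (insert_subset (sdiff_subset hx) (singleton_subset_iff.mpr (sdiff_subset hy))) hMT
    by_cases hind : ∃ x ∈ U, ∃ y ∈ U, Rᶜ.Adj x y
    · obtain ⟨x, hx, y, hy, hxy⟩ := hind
      obtain ⟨M', hM', hcard, hsub⟩ := hM.exists_augment_edge (hnot x hx) (hnot y hy) hxy
      exact ⟨M', hM', hsub.trans (hUT hx hy), hcard⟩
    push Not at hind
    obtain ⟨u, hu, w, hw, huw⟩ := one_lt_card.mp (by omega : 1 < #U)
    obtain ⟨e, he, ⟨hu1, hw2⟩ | ⟨hu2, hw1⟩⟩ :=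
      hM.exists_augment_path_compl hdeg (by omega) hUM (by omega) hind hu hw
    · obtain ⟨M', hM', hcard, hsub⟩ :=
        hM.exists_augment_path he (hnot u hu) (hnot w hw) huw hu1 hw2
      exact ⟨M', hM', hsub.trans (hUT hu hw), hcard⟩
    · obtain ⟨M', hM', hcard, hsub⟩ :=
        hM.exists_augment_path he (hnot w hw) (hnot u hu) huw.symm hw1 hu2
      exact ⟨M', hM', hsub.trans (hUT hw hu), hcard⟩

end BoundedDegree

theorem containsCopy_starGraph_or_compl_fanGraph [Fintype V] [Nonempty V] {n : ℕ}
    (R : SimpleGraph V) (hV : 3 * n ≤ Fintype.card V) :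
    ContainsCopy R (starGraph n) ∨ ContainsCopy Rᶜ (fanGraph n) := by
  classical
  by_cases hstar : ∃ v, n ≤ R.degree v
  · obtain ⟨v, hv⟩ := hstar
    exact Or.inl (containsCopy_starGraph hv)
  push Not at hstar
  obtain ⟨v⟩ := ‹Nonempty V›
  have hT : 2 * n ≤ #(Rᶜ.neighborFinset v) := by
    rw [card_neighborFinset_eq_degree, degree_compl]
    have := hstar v
    omega
  obtain ⟨M, hM, hMT, rfl⟩ := exists_isPairMatching_compl hstar hT
  obtain ⟨g, hg, hgM⟩ := hM.exists_embedding
  exact Or.inr (containsCopy_fanGraph v g (fun x => (mem_neighborFinset _ _ _).mp (hMT (hgM x))) hg)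

lemma not_containsCopy_starGraph [Fintype V] {R : SimpleGraph V} [DecidableRel R.Adj] {n : ℕ}
    (h : ∀ v, R.degree v < n) : ¬ ContainsCopy R (starGraph n) := fun hc =>
  let ⟨v, hv⟩ := hc.exists_le_degree starGraph_adj_zero_succ
  (h v).not_ge hv

lemma not_containsCopy_fanGraph [Fintype V] {B : SimpleGraph V} [DecidableRel B.Adj] {n : ℕ}
    (h : ∀ v, B.degree v < 2 * n) : ¬ ContainsCopy B (fanGraph n) := fun hc =>
  let ⟨v, hv⟩ := hc.exists_le_degree fanGraph_adj_zero_succ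
  (h v).not_ge hv

lemma card_filter_val_mem_Icc_le (N a b : ℕ) : #{d : Fin N | d.val ∈ Icc a b} ≤ b + 1 - a :=
  (card_le_card_of_injOn Fin.val (fun d hd => by simpa using hd) Fin.val_injective.injOn).trans
    (Nat.card_Icc a b).le

section Circulant

variable {N : ℕ} [NeZero N] (m : ℕ)

lemma degree_circulantGraph_Icc_le (v : Fin N) :
    (circulantGraph {d : Fin N | d.val ∈ Icc 1 m}).degree v ≤ 2 * m := by
  set S : Finset (Fin N) := {d | d.val ∈ Icc 1 m}
  have hS : #S ≤ m := (card_filter_val_mem_Icc_le N 1 m).trans (by omega)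
  calc _ = #((circulantGraph _).neighborFinset v) := (card_neighborFinset_eq_degree _ _).symm
    _ ≤ #(S.image (v - ·) ∪ S.image (· + v)) := by
        refine card_le_card fun w hw => ?_
        simp only [mem_neighborFinset, circulantGraph_adj, Set.mem_ofPred_eq] at hw
        rcases hw.2 with h | h
        · exact mem_union_left _ (mem_image.mpr ⟨v - w, by simpa [S] using h, sub_sub_cancel v w⟩)
        · exact mem_union_right _ (mem_image.mpr ⟨w - v, by simpa [S] using h, sub_add_cancel w v⟩)
    _ ≤ #S + #S := (card_union_le _ _).trans (add_le_add card_image_le card_image_le)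
    _ ≤ 2 * m := by omega

lemma degree_compl_circulantGraph_Icc_le (v : Fin N) :
    (circulantGraph {d : Fin N | d.val ∈ Icc 1 m})ᶜ.degree v ≤ N - 2 * m - 1 := by
  set S : Finset (Fin N) := {d | d.val ∈ Icc (m + 1) (N - m - 1)}
  calc _ = #((circulantGraph _)ᶜ.neighborFinset v) := (card_neighborFinset_eq_degree _ _).symm
    _ ≤ #(S.image (· + v)) := by
        refine card_le_card fun w hw => mem_image.mpr ⟨w - v, ?_, sub_add_cancel w v⟩
        simp only [mem_neighborFinset, compl_adj, circulantGraph_adj, Set.mem_ofPred_eq,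
          mem_Icc] at hw
        have hne : w - v ≠ 0 := sub_ne_zero.mpr (Ne.symm hw.1)
        have hneg : (v - w).val = N - (w - v).val := by
          rw [← neg_sub, Fin.val_neg, if_neg hne]
        have hpos : 0 < (w - v).val := Fin.pos_iff_ne_zero.mpr hne
        have hlt := (w - v).isLt
        simp only [S, mem_filter, mem_univ, true_and, mem_Icc]
        omega
    _ ≤ N - 2 * m - 1 :=
        card_image_le.trans ((card_filter_val_mem_Icc_le N _ _).trans (by omega))

end Circulant

lemma exists_not_containsCopy_starGraph_compl_fanGraph {n N : ℕ} (hn : Odd n) (hN : N < 3 * n) :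
    ∃ R : SimpleGraph (Fin N),
      ¬ ContainsCopy R (starGraph n) ∧ ¬ ContainsCopy Rᶜ (fanGraph n) := by
  obtain ⟨m, rfl⟩ := hn
  rcases N.eq_zero_or_pos with rfl | hN0
  · exact ⟨⊥, not_containsCopy_starGraph (fun v => v.elim0),
      not_containsCopy_fanGraph (fun v => v.elim0)⟩
  have : NeZero N := ⟨hN0.ne'⟩
  refine ⟨circulantGraph {d : Fin N | d.val ∈ Icc 1 m},
    not_containsCopy_starGraph fun v => ?_, not_containsCopy_fanGraph fun v => ?_⟩
  · have := degree_circulantGraph_Icc_le m v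
    omega
  · have := degree_compl_circulantGraph_Icc_le m v
    omega

theorem ramsey_star_fan_odd_general (n : ℕ) (hodd : Odd n) :
    IsLeast {N : ℕ | ∀ R : SimpleGraph (Fin N),
      ContainsCopy R (starGraph n) ∨ ContainsCopy Rᶜ (fanGraph n)} (3 * n) := by
  refine ⟨fun R => ?_, fun N hN => ?_⟩
  · have : Nonempty (Fin (3 * n)) := ⟨⟨0, by have := hodd.pos; omega⟩⟩
    exact containsCopy_starGraph_or_compl_fanGraph R (by simp)
  · by_contra! hlt
    obtain ⟨R, hstar, hfan⟩ := exists_not_containsCopy_starGraph_compl_fanGraph hodd hlt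
    exact (hN R).elim hstar hfan

/-- For every odd `n ≥ 1`, the Ramsey number `R(K_{1,n}, F_n)` equals `3n`:
`3n` is the least `N` such that every red-blue coloring of `K_N` (here, `R` is
the red graph and `Rᶜ` the blue graph) contains a red `K_{1,n}` or a blue `F_n`. -/
theorem ramsey_star_fan_odd (n : ℕ) (hn : 1 ≤ n) (hodd : Odd n) :
    IsLeast {N : ℕ | ∀ R : SimpleGraph (Fin N),
      ContainsCopy R (starGraph n) ∨ ContainsCopy Rᶜ (fanGraph n)} (3 * n) :=
  ramsey_star_fan_odd_general n hodd
end

section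
/- For every even integer n ≥ 2, the Ramsey number R(K_{1,n}, F_n) equals 3n − 1; that is, every red-blue edge-coloring of the complete graph on 3n − 1 vertices contains a red copy of the star K_{1,n} or a blue copy of the fan F_n, and 3n − 1 is the smallest integer with this property. -/
/-!
Upper bound: if there is no red `K_{1,n}`, every red degree is at most `n - 1`. As `3n - 1` and
`n - 1` are odd, the red graph is not `(n - 1)`-regular, so some vertex `v` has at least `2n` blue
neighbours, and in its blue neighbourhood every vertex misses fewer than `n` others. Such a graph
has `n` disjoint edges: while a matching has fewer than `n` edges there are two unmatched vertices,
and if neither an edge between unmatched vertices nor an augmenting path of length 3 exists, the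
numbers of non-neighbours of two unmatched vertices add up to at least `2n`. These edges and `v`
form a blue `F_n`.

Lower bound: on `N ≤ 3n - 2` vertices, colour blue the Turán graph `T(N, 3)`. Its parts have at
most `n` and at least `N - 2n + 1` vertices, so red degrees are below `n` and blue degrees below
`2n`, the degree of the centre of `F_n`.
-/

open Finset

section Copies

variable {V : Type*} {G : SimpleGraph V} {n : ℕ}

lemma ContainsCopy.mono {W : Type*} {H H' : SimpleGraph W} (h : ContainsCopy G H) (hle : H' ≤ H) :
    ContainsCopy G H' :=
  let ⟨f, hf⟩ := h; ⟨f, fun _ _ hab => hf (hle hab)⟩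

lemma starGraph_le_fanGraph (n : ℕ) : starGraph (2 * n) ≤ fanGraph n :=
  fun _ _ ⟨hne, h0⟩ => ⟨hne, h0.elim Or.inl (Or.inr ∘ Or.inl)⟩

lemma containsCopy_fanGraph_s1 {v : V} (e : Fin n × Fin 2 ↪ G.neighborSet v)
    (he : ∀ i, G.Adj (e (i, 0)) (e (i, 1))) : ContainsCopy G (fanGraph n) := by
  -- the leaf `b : Fin (2 * n)` of the fan is sent to the endpoint `b % 2` of the edge `b / 2`
  let c : Fin (2 * n) ≃ Fin n × Fin 2 := (finCongr (mul_comm 2 n)).trans finProdFinEquiv.symm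
  have hc : ∀ b, ((c b).1 : ℕ) = b / 2 := fun b => by simp [c]
  have hinj : Function.Injective (Fin.cons v fun b => (e (c b) : V) : Fin (2 * n + 1) → V) :=
    Fin.cons_injective_iff.2 ⟨by rintro ⟨b, hb⟩; exact (e (c b)).2.ne hb.symm,
      Subtype.val_injective.comp (e.injective.comp c.injective)⟩
  have hpair : ∀ p q : Fin n × Fin 2, p.1 = q.1 → p.2 ≠ q.2 → G.Adj (e p) (e q) := by
    rintro ⟨i, j⟩ ⟨i', j'⟩ (rfl : i = i') hj
    fin_cases j <;> fin_cases j' <;> simp_all [he i, (he i).symm]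
  refine ⟨⟨_, hinj⟩, ?_⟩
  intro a b ⟨hab, hab'⟩
  cases a using Fin.cases with
  | zero =>
    obtain ⟨b, rfl⟩ := Fin.exists_succ_eq.2 hab.symm
    exact (e (c b)).2
  | succ a =>
    cases b using Fin.cases with
    | zero => exact (e (c a)).2.symm
    | succ b =>
      have h1 : ((c a).1 : ℕ) = (c b).1 := by
        rw [hc a, hc b]
        simpa [Fin.succ_ne_zero] using hab'
      have h2 : (c a).2 ≠ (c b).2 := fun h2 =>
        hab <| congrArg Fin.succ <| c.injective (Prod.ext (Fin.ext h1) h2)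
      exact hpair _ _ (Fin.ext h1) h2

lemma containsCopy_starGraph_iff [Fintype V] [DecidableRel G.Adj] :
    ContainsCopy G (starGraph n) ↔ ∃ v, n ≤ G.degree v := by
  constructor
  · rintro ⟨f, hf⟩
    refine ⟨f 0, ?_⟩
    calc n = #(univ.map ((Fin.succEmb n).trans f)) := by simp
      _ ≤ G.degree (f 0) := card_le_card fun w hw => by
        obtain ⟨i, -, rfl⟩ := mem_map.1 hw
        exact (G.mem_neighborFinset _ _).2 (hf ⟨(Fin.succ_ne_zero i).symm, Or.inl rfl⟩)
  · rintro ⟨v, hv⟩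
    obtain ⟨g⟩ : Nonempty (Fin n ↪ G.neighborSet v) :=
      Function.Embedding.nonempty_of_card_le <| by
        rwa [Fintype.card_fin, G.card_neighborSet_eq_degree]
    have hinj : Function.Injective (Fin.cons v fun i => (g i : V) : Fin (n + 1) → V) :=
      Fin.cons_injective_iff.2 ⟨by rintro ⟨i, hi⟩; exact (g i).2.ne hi.symm,
        Subtype.val_injective.comp g.injective⟩
    refine ⟨⟨_, hinj⟩, ?_⟩
    rintro a b ⟨hab, rfl | rfl⟩
    · obtain ⟨i, rfl⟩ := Fin.exists_succ_eq.2 hab.symm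
      exact (g i).2
    · obtain ⟨i, rfl⟩ := Fin.exists_succ_eq.2 hab
      exact (g i).2.symm

end Copies

section Matching

-- A matching of `G` indexed by `ι` is an embedding `e : ι × Fin 2 ↪ V` whose `i`-th edge joins
-- `e (i, 0)` and `e (i, 1)`.

variable {V ι : Type*} {G : SimpleGraph V}

lemma two_mul_card_le_card_filter_not_adj_add [Fintype ι] [DecidableRel G.Adj] (e : ι × Fin 2 → V)
    {u₁ u₂ : V} (h₁₂ : ∀ i, G.Adj (e (i, 0)) u₁ → ¬ G.Adj (e (i, 1)) u₂)
    (h₂₁ : ∀ i, G.Adj (e (i, 0)) u₂ → ¬ G.Adj (e (i, 1)) u₁) :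
    2 * Fintype.card ι ≤ #{p | ¬ G.Adj u₁ (e p)} + #{p | ¬ G.Adj u₂ (e p)} := by
  simp only [card_filter, ← sum_add_distrib, Fintype.sum_prod_type, Fin.sum_univ_two]
  rw [mul_comm, ← smul_eq_mul, ← card_univ, ← sum_const]
  refine sum_le_sum fun i _ => ?_
  have := h₁₂ i
  have := h₂₁ i
  simp only [G.adj_comm (e _)] at *
  split_ifs <;> tauto

variable {e : ι × Fin 2 ↪ V}

lemma exists_matching_option_of_adj (he : ∀ i, G.Adj (e (i, 0)) (e (i, 1))) {u w : V}
    (huw : G.Adj u w) (hu : u ∉ Set.range e) (hw : w ∉ Set.range e) :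
    ∃ e' : Option ι × Fin 2 ↪ V, ∀ i, G.Adj (e' (i, 0)) (e' (i, 1)) := by
  let f : Option ι × Fin 2 → V := fun p => p.1.elim (![u, w] p.2) fun i => e (i, p.2)
  have hf : Function.Injective f := by
    rintro ⟨_ | i, j⟩ ⟨_ | i', j'⟩ h <;> fin_cases j <;> fin_cases j' <;>
      simp_all [f, huw.ne, huw.ne.symm, eq_comm]
  exact ⟨⟨f, hf⟩, fun i => i.casesOn huw he⟩

lemma exists_matching_option_of_adj_of_adj (he : ∀ i, G.Adj (e (i, 0)) (e (i, 1))) {i₀ : ι}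
    {a b : V} (hab : a ≠ b) (ha : a ∉ Set.range e) (hb : b ∉ Set.range e)
    (hxa : G.Adj (e (i₀, 0)) a) (hyb : G.Adj (e (i₀, 1)) b) :
    ∃ e' : Option ι × Fin 2 ↪ V, ∀ i, G.Adj (e' (i, 0)) (e' (i, 1)) := by
  classical
  -- rematch `e (i₀, 0)` with `a`, which frees `e (i₀, 1)` to be matched with `b`
  set σ := Equiv.swap (e (i₀, 1)) a
  have hσ : ∀ p, p ≠ (i₀, 1) → σ (e p) = e p := fun p hp =>
    Equiv.swap_apply_of_ne_of_ne (e.injective.ne hp) fun h => ha ⟨p, h⟩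
  refine exists_matching_option_of_adj (e := e.trans σ.toEmbedding) (fun i => ?_) hyb ?_ ?_
  · by_cases hi : i = i₀
    · subst hi
      simpa [σ, hσ (i, 0)] using hxa
    · simpa [hσ (i, 0), hσ (i, 1), hi] using he i
  · rintro ⟨p, hp⟩
    simp only [Function.Embedding.trans_apply, Equiv.coe_toEmbedding, σ, Equiv.swap_apply_eq_iff,
      Equiv.swap_apply_left] at hp
    exact ha ⟨p, hp⟩
  · rintro ⟨p, hp⟩
    simp only [Function.Embedding.trans_apply, Equiv.coe_toEmbedding, σ, Equiv.swap_apply_eq_iff,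
      Equiv.swap_apply_of_ne_of_ne (fun h => hb ⟨_, h.symm⟩) hab.symm] at hp
    exact hb ⟨p, hp⟩

variable [Fintype V] [DecidableEq V] [DecidableRel G.Adj]

lemma card_filter_not_adj_add_le_degree_compl {α : Type*} [Fintype α] (f : α ↪ V) {W : Finset V}
    {u : V} (hu : u ∈ W) (hWf : ∀ w ∈ W, w ∉ Set.range f) (hW : ∀ w ∈ W, ¬ G.Adj u w) :
    #{a | ¬ G.Adj u (f a)} + (#W - 1) ≤ Gᶜ.degree u := by
  set s : Finset α := {a | ¬ G.Adj u (f a)}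
  have hdisj : Disjoint (s.map f) (W.erase u) := disjoint_left.2 fun w hw hwW => by
    obtain ⟨a, -, rfl⟩ := mem_map.1 hw
    exact hWf _ (mem_of_mem_erase hwW) ⟨a, rfl⟩
  calc #s + (#W - 1) = #((s.map f).disjUnion (W.erase u) hdisj) := by
        rw [card_disjUnion, card_map, card_erase_of_mem hu]
    _ ≤ Gᶜ.degree u := card_le_card fun w hw => by
        rw [mem_disjUnion] at hw
        rw [Gᶜ.mem_neighborFinset, G.compl_adj]
        rcases hw with hw | hw
        · obtain ⟨a, ha, rfl⟩ := mem_map.1 hw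
          exact ⟨fun h => hWf u hu ⟨a, h.symm⟩, (mem_filter.1 ha).2⟩
        · exact ⟨(ne_of_mem_erase hw).symm, hW w (mem_of_mem_erase hw)⟩

variable {n : ℕ}

lemma exists_matching_option [Fintype ι] (hV : 2 * n ≤ Fintype.card V)
    (hdeg : ∀ v, Gᶜ.degree v < n) (hι : Fintype.card ι < n) (e : ι × Fin 2 ↪ V)
    (he : ∀ i, G.Adj (e (i, 0)) (e (i, 1))) :
    ∃ e' : Option ι × Fin 2 ↪ V, ∀ i, G.Adj (e' (i, 0)) (e' (i, 1)) := by
  set W := (univ.map e)ᶜ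
  have hWe : ∀ w ∈ W, w ∉ Set.range e := by simp [W]
  have hW : 2 * n - 2 * Fintype.card ι ≤ #W := by
    rw [card_compl, card_map, card_univ, Fintype.card_prod, Fintype.card_fin]
    omega
  by_cases h₁ : ∃ u ∈ W, ∃ w ∈ W, G.Adj u w
  · obtain ⟨u, hu, w, hw, huw⟩ := h₁
    exact exists_matching_option_of_adj he huw (hWe u hu) (hWe w hw)
  by_cases h₂ : ∃ i, ∃ a ∈ W, ∃ b ∈ W, a ≠ b ∧ G.Adj (e (i, 0)) a ∧ G.Adj (e (i, 1)) b
  · obtain ⟨i, a, ha, b, hb, hab, hxa, hyb⟩ := h₂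
    exact exists_matching_option_of_adj_of_adj he hab (hWe a ha) (hWe b hb) hxa hyb
  push Not at h₁ h₂
  obtain ⟨u₁, hu₁, u₂, hu₂, hne⟩ := one_lt_card.1 (by omega : 1 < #W)
  have hcount := two_mul_card_le_card_filter_not_adj_add e (G := G)
    (fun i => h₂ i u₁ hu₁ u₂ hu₂ hne) (fun i => h₂ i u₂ hu₂ u₁ hu₁ hne.symm)
  have h₁' := card_filter_not_adj_add_le_degree_compl e hu₁ hWe (h₁ u₁ hu₁)
  have h₂' := card_filter_not_adj_add_le_degree_compl e hu₂ hWe (h₁ u₂ hu₂)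
  have := hdeg u₁
  have := hdeg u₂
  omega

theorem exists_matching_of_degree_compl_lt (hV : 2 * n ≤ Fintype.card V)
    (hdeg : ∀ v, Gᶜ.degree v < n) :
    ∃ e : Fin n × Fin 2 ↪ V, ∀ i, G.Adj (e (i, 0)) (e (i, 1)) := by
  suffices ∀ k ≤ n, ∃ e : Fin k × Fin 2 ↪ V, ∀ i, G.Adj (e (i, 0)) (e (i, 1)) from this n le_rfl
  intro k hk
  induction k with
  | zero => exact ⟨Function.Embedding.ofIsEmpty, fun i => i.elim0⟩
  | succ k ih =>
    obtain ⟨e, he⟩ := ih (by omega)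
    obtain ⟨e', he'⟩ := exists_matching_option hV hdeg (by simpa using hk) e he
    exact ⟨((finSuccEquiv k).prodCongr (Equiv.refl _)).toEmbedding.trans e',
      fun i => he' (finSuccEquiv k i)⟩

end Matching

section Degrees

variable {V : Type*} [Fintype V] {G : SimpleGraph V} [DecidableRel G.Adj]

lemma exists_degree_lt_of_odd_card {d : ℕ} (hV : Odd (Fintype.card V)) (hd : Odd d)
    (h : ∀ v, G.degree v ≤ d) : ∃ v, G.degree v < d := by
  by_contra! h'
  have hodd : ({v | Odd (G.degree v)} : Finset V) = univ :=
    filter_true_of_mem fun v _ => le_antisymm (h v) (h' v) ▸ hd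
  have := G.even_card_odd_degree_vertices
  rw [hodd, card_univ] at this
  exact Nat.not_even_iff_odd.2 hV this

lemma degree_compl_induce_compl_le [DecidableEq V] (s : Set V) [DecidablePred (· ∈ s)] (v : s) :
    (Gᶜ.induce s)ᶜ.degree v ≤ G.degree v :=
  SimpleGraph.Copy.degree_le
    ⟨⟨Subtype.val, fun {a b} h => by
      by_contra hab
      exact h.2 ⟨Subtype.val_injective.ne h.1, hab⟩⟩, Subtype.val_injective⟩ v

end Degrees

lemma card_filter_val_mod_eq (N : ℕ) {r : ℕ} (hr : 0 < r) (v : ℕ) :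
    #{w : Fin N | (w : ℕ) % r = v % r} = N / r + if v % r < N % r then 1 else 0 := by
  rw [← Nat.count_modEq_card N hr v, Nat.count_eq_card_filter_range, ← card_map Fin.valEmbedding]
  congr 1
  ext x
  rw [mem_filter, mem_range, mem_map]
  simp only [mem_filter, mem_univ, true_and, Fin.valEmbedding_apply, Nat.ModEq]
  exact ⟨fun ⟨a, h, hx⟩ => hx ▸ ⟨a.2, h⟩, fun ⟨hx, h⟩ => ⟨⟨x, hx⟩, h, rfl⟩⟩

lemma degree_turanGraph {N r : ℕ} (hr : 0 < r) (v : Fin N) :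
    (SimpleGraph.turanGraph N r).degree v = N - (N / r + if v % r < N % r then 1 else 0) := by
  have hnbr : (SimpleGraph.turanGraph N r).neighborFinset v =
      ({w | ¬ (w : ℕ) % r = v % r} : Finset (Fin N)) := by
    ext
    simp [SimpleGraph.turanGraph_adj, eq_comm]
  have hsplit := card_filter_add_card_filter_not (s := univ) fun w : Fin N => (w : ℕ) % r = v % r
  rw [card_univ, Fintype.card_fin, card_filter_val_mod_eq N hr] at hsplit
  rw [← SimpleGraph.card_neighborFinset_eq_degree, hnbr]
  omega

theorem containsCopy_starGraph_or_containsCopy_compl_fanGraph {n : ℕ} (hn : 2 ≤ n) (heven : Even n)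
    (R : SimpleGraph (Fin (3 * n - 1))) :
    ContainsCopy R (starGraph n) ∨ ContainsCopy Rᶜ (fanGraph n) := by
  classical
  rw [or_iff_not_imp_left, containsCopy_starGraph_iff]
  push Not
  intro hdeg
  obtain ⟨m, rfl⟩ := heven
  obtain ⟨v, hv⟩ := exists_degree_lt_of_odd_card (G := R) (d := m + m - 1)
    (by rw [Fintype.card_fin]; exact ⟨3 * m - 1, by omega⟩) ⟨m - 1, by omega⟩
    fun v => by have := hdeg v; omega
  have hcard : 2 * (m + m) ≤ Fintype.card (Rᶜ.neighborSet v) := by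
    rw [SimpleGraph.card_neighborSet_eq_degree, SimpleGraph.degree_compl, Fintype.card_fin]
    omega
  obtain ⟨e, he⟩ := exists_matching_of_degree_compl_lt (G := Rᶜ.induce (Rᶜ.neighborSet v)) hcard
    fun w => (degree_compl_induce_compl_le _ w).trans_lt (hdeg w)
  exact containsCopy_fanGraph_s1 e he

theorem exists_not_containsCopy_starGraph_and_not_containsCopy_compl_fanGraph {n N : ℕ}
    (hN : N < 3 * n - 1) :
    ∃ R : SimpleGraph (Fin N), ¬ ContainsCopy R (starGraph n) ∧ ¬ ContainsCopy Rᶜ (fanGraph n) := by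
  refine ⟨(SimpleGraph.turanGraph N 3)ᶜ, ?_, ?_⟩
  · rw [containsCopy_starGraph_iff]
    rintro ⟨v, hv⟩
    rw [SimpleGraph.degree_compl, degree_turanGraph three_pos, Fintype.card_fin] at hv
    split_ifs at hv <;> omega
  · rw [compl_compl]
    intro h
    obtain ⟨v, hv⟩ := containsCopy_starGraph_iff.1 (h.mono (starGraph_le_fanGraph n))
    rw [degree_turanGraph three_pos] at hv
    split_ifs at hv <;> omega

/-- For every even `n ≥ 2`, the Ramsey number `R(K_{1,n}, F_n)` equals `3n - 1`. -/
theorem ramsey_star_fan_even (n : ℕ) (hn : 2 ≤ n) (heven : Even n) :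
    IsLeast {N : ℕ | ∀ R : SimpleGraph (Fin N),
      ContainsCopy R (starGraph n) ∨ ContainsCopy Rᶜ (fanGraph n)} (3 * n - 1) := by
  refine ⟨containsCopy_starGraph_or_containsCopy_compl_fanGraph hn heven, fun N hN => ?_⟩
  by_contra! hlt
  obtain ⟨R, hstar, hfan⟩ :=
    exists_not_containsCopy_starGraph_and_not_containsCopy_compl_fanGraph hlt
  exact (hN R).elim hstar hfan
end

section
/- For every integer n ≥ 1, setting ε = 0 if n is odd and ε = 1 if n is even, there exists a red-blue edge-coloring of the complete graph on 3n − 1 − ε vertices that contains neither a red copy of the star K_{1,n} nor a blue copy of the fan F_n. (Such a coloring is obtained by taking a red clique on n vertices joined entirely by blue edges to a clique H on 2n − 1 − ε vertices in which every vertex has exactly n − 1 red neighbors within H.) -/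
/-!
Colour red a clique on `n` vertices and, disjoint from it, the circulant graph on `ZMod m` with
jumps `±1, …, ±t`, where `t = ⌊(n - 1)/2⌋` and `m = 2n - 1 - ε`; every other edge is blue. The red
graph has maximum degree `max (n - 1) (2t) < n`, so it has no `K_{1,n}`. A blue fan centred in the
clique would need `2n` blue neighbours, but only the `m < 2n` circulant vertices are available.
A blue fan centred at a circulant vertex `c` has `n` disjoint blue edges, none inside the red
clique, so `c` has at least `n` blue neighbours among the circulant vertices; there are only
`m - 1 - 2t = n - 1` of them.
-/

open Finset Function
open SimpleGraph (circulantGraph)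
open scoped Pointwise

section Copies

variable {V W β : Type*} {G : SimpleGraph V} {H : SimpleGraph β}

theorem ContainsCopy.map {G' : SimpleGraph W} (h : ContainsCopy G H) (φ : G ↪g G') :
    ContainsCopy G' H := by
  obtain ⟨f, hf⟩ := h
  exact ⟨f.trans φ.toEmbedding, fun a b hab => φ.map_adj_iff.mpr (hf hab)⟩

theorem ContainsCopy.exists_star {n : ℕ} (h : ContainsCopy G (starGraph n)) :
    ∃ (c : V) (l : Fin n → V), Injective l ∧ ∀ i, G.Adj c (l i) := by
  obtain ⟨f, hf⟩ := h
  exact ⟨f 0, f ∘ Fin.succ, f.injective.comp (Fin.succ_injective _),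
    fun i => hf ⟨(Fin.succ_ne_zero i).symm, Or.inl rfl⟩⟩

theorem ContainsCopy.exists_fan {n : ℕ} (h : ContainsCopy G (fanGraph n)) :
    ∃ (c : V) (p q : Fin n → V), Injective (Sum.elim p q) ∧
      ∀ i, G.Adj c (p i) ∧ G.Adj c (q i) ∧ G.Adj (p i) (q i) := by
  obtain ⟨f, hf⟩ := h
  let p : Fin n → Fin (2 * n + 1) := fun i => ⟨2 * i + 1, by omega⟩
  let q : Fin n → Fin (2 * n + 1) := fun i => ⟨2 * i + 2, by omega⟩
  have hpq : Injective (Sum.elim p q) := by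
    rintro (i | i) (j | j) h <;> simp [Fin.ext_iff, p, q] at h ⊢ <;> omega
  refine ⟨f 0, f ∘ p, f ∘ q, ?_, fun i => ⟨hf ?_, hf ?_, hf ?_⟩⟩
  · rw [← Sum.comp_elim]
    exact f.injective.comp hpq
  · exact ⟨by simp [Fin.ext_iff, p], Or.inl rfl⟩
  · exact ⟨by simp [Fin.ext_iff, q], Or.inl rfl⟩
  · refine ⟨by simp [Fin.ext_iff, p, q], Or.inr (Or.inr ?_)⟩
    simp only [p, q]
    omega

end Copies

theorem card_le_card_of_injective_sumElim {ι α : Type*} [Fintype ι] {p q : ι → α}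
    (hpq : Injective (Sum.elim p q)) {T : Finset α} (hT : ∀ i, p i ∈ T ∨ q i ∈ T) :
    Fintype.card ι ≤ #T := by
  classical
  let k : ι → ι ⊕ ι := fun i => if p i ∈ T then .inl i else .inr i
  have hk : LeftInverse (Sum.elim id id) k := fun i => by unfold k; split_ifs <;> rfl
  refine card_le_card_of_injOn (Sum.elim p q ∘ k) (fun i _ => ?_)
    (hpq.comp hk.injective).injOn
  show Sum.elim p q (k i) ∈ T
  dsimp only [k]
  split_ifs with hi
  · exact hi
  · exact (hT i).resolve_left hi

section TopSum

variable {α W : Type*} [Fintype W] [DecidableEq W]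
  {C : SimpleGraph W} [DecidableRel C.Adj] {n : ℕ}

theorem not_containsCopy_starGraph_top_sum [Fintype α] [DecidableEq α] (hα : Fintype.card α ≤ n)
    (hC : ∀ w, C.degree w < n) :
    ¬ ContainsCopy ((⊤ : SimpleGraph α) ⊕g C) (starGraph n) := by
  intro h
  obtain ⟨c | c, l, hl, hadj⟩ := h.exists_star
  · have := card_le_card_of_injOn (s := univ)
      (t := (univ.erase c).map (Embedding.inl : α ↪ α ⊕ W)) l (fun i _ => ?_) hl.injOn
    · simp only [card_map, card_erase_of_mem (mem_univ c), card_univ, Fintype.card_fin] at this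
      have : 0 < Fintype.card α := Fintype.card_pos_iff.mpr ⟨c⟩
      omega
    have := hadj i
    rcases hli : l i with a | w <;> simp_all [eq_comm]
  · have := card_le_card_of_injOn (s := univ)
      (t := (C.neighborFinset c).map (Embedding.inr : W ↪ α ⊕ W)) l (fun i _ => ?_) hl.injOn
    · rw [card_map, SimpleGraph.card_neighborFinset_eq_degree, card_univ, Fintype.card_fin] at this
      exact (hC c).not_ge this
    have := hadj i
    rcases hli : l i with a | w <;> simp_all

theorem not_containsCopy_fanGraph_compl_top_sum (hW : Fintype.card W < 2 * n)
    (hC : ∀ w, Cᶜ.degree w < n) :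
    ¬ ContainsCopy ((⊤ : SimpleGraph α) ⊕g C)ᶜ (fanGraph n) := by
  intro h
  obtain ⟨c | c, p, q, hpq, hadj⟩ := h.exists_fan
  · have : Fintype.card (Fin n ⊕ Fin n) ≤ #(univ.map (Embedding.inr : W ↪ α ⊕ W)) := by
      refine card_le_card_of_injOn _ (fun i _ => ?_) hpq.injOn
      rcases i with i | i
      · have := (hadj i).1
        rcases hli : p i with a | w <;> simp_all
      · have := (hadj i).2.1
        rcases hli : q i with a | w <;> simp_all
    simp only [Fintype.card_sum, Fintype.card_fin, card_map, card_univ] at this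
    omega
  · -- the `n` disjoint blue edges each have an endpoint outside the red clique
    refine (hC c).not_ge ?_
    rw [← SimpleGraph.card_neighborFinset_eq_degree, ← card_map Embedding.inr]
    refine Fintype.card_fin n ▸ card_le_card_of_injective_sumElim hpq fun i => ?_
    obtain ⟨hp, hq, hpq⟩ := hadj i
    rcases hpi : p i with a | w <;> rcases hqi : q i with b | x <;> simp_all

end TopSum

theorem SimpleGraph.degree_circulantGraph {G : Type*} [AddCommGroup G] [Fintype G]
    [DecidableEq G] (s : Finset G) (v : G) :
    (circulantGraph (s : Set G)).degree v = #((s ∪ -s).erase 0) := by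
  rw [← card_neighborFinset_eq_degree]
  refine card_nbij' (fun w => w - v) (fun d => v + d) ?_ ?_ ?_ ?_ <;> intro x hx <;>
    simp_all [circulantGraph_adj] <;> grind

abbrev cyclePowerGraph (m t : ℕ) : SimpleGraph (ZMod m) :=
  circulantGraph (((Icc 1 t).image Nat.cast : Finset (ZMod m)) : Set (ZMod m))

theorem cyclePowerGraph_degree {m t : ℕ} [NeZero m] (h : 2 * t < m) (v : ZMod m) :
    (cyclePowerGraph m t).degree v = 2 * t := by
  set s : Finset (ZMod m) := (Icc 1 t).image Nat.cast
  have hcast : ∀ a ∈ Icc 1 t, ∀ b ∈ Icc 1 t, (a : ZMod m) + b ≠ 0 := by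
    intro a ha b hb hab
    rw [← Nat.cast_add, ZMod.natCast_eq_zero_iff] at hab
    simp only [mem_Icc] at ha hb
    exact absurd (Nat.le_of_dvd (by omega) hab) (by omega)
  have hs : #s = t := by
    rw [card_image_of_injOn, Nat.card_Icc, Nat.add_sub_cancel]
    intro a ha b hb hab
    simp only [coe_Icc, Set.mem_Icc] at ha hb
    rwa [ZMod.natCast_eq_natCast_iff', Nat.mod_eq_of_lt (by omega), Nat.mod_eq_of_lt (by omega)]
      at hab
  have hdisj : Disjoint s (-s) := by
    simp only [s, disjoint_left, mem_neg', mem_image]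
    rintro _ ⟨a, ha, rfl⟩ ⟨b, hb, hba⟩
    exact hcast b hb a ha (by rw [hba, neg_add_cancel])
  have hzero : (0 : ZMod m) ∉ s ∪ -s := by
    simp only [s, mem_union, mem_neg', neg_zero, or_self, mem_image]
    rintro ⟨a, ha, ha0⟩
    exact hcast a ha a ha (by rw [ha0, add_zero])
  rw [SimpleGraph.degree_circulantGraph, erase_eq_of_notMem hzero, card_union_of_disjoint hdisj,
    card_neg, hs, two_mul]

theorem exists_coloring_of_cyclePowerGraph (n m t : ℕ) [NeZero m] (hm : m < 2 * n)
    (htm : 2 * t < m) (htn : 2 * t < n) (hmt : m < n + 2 * t + 1) :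
    ∃ R : SimpleGraph (Fin (n + m)),
      ¬ ContainsCopy R (starGraph n) ∧ ¬ ContainsCopy Rᶜ (fanGraph n) := by
  let K := (⊤ : SimpleGraph (Fin n)) ⊕g cyclePowerGraph m t
  let e : Fin (n + m) ≃ Fin n ⊕ ZMod m := Fintype.equivOfCardEq (by simp)
  refine ⟨K.comap e, fun h => ?_, fun h => ?_⟩
  · exact not_containsCopy_starGraph_top_sum (by simp) (fun w => cyclePowerGraph_degree htm w ▸ htn)
      (h.map (SimpleGraph.Iso.comap e K).toEmbedding)
  · refine not_containsCopy_fanGraph_compl_top_sum (by simpa using hm) (fun w => ?_)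
      (h.map (SimpleGraph.Embedding.complEquiv (SimpleGraph.Iso.comap e K).toEmbedding))
    rw [SimpleGraph.degree_compl, ZMod.card, cyclePowerGraph_degree htm]
    omega

/-- For every `n ≥ 1`, with `ε = 0` if `n` is odd and `ε = 1` if `n` is even,
there is a red-blue coloring of the complete graph on `3n - 1 - ε` vertices with
no red `K_{1,n}` and no blue `F_n`. -/
theorem star_fan_lower (n : ℕ) (hn : 1 ≤ n) :
    ∃ R : SimpleGraph (Fin (3 * n - 1 - if Odd n then 0 else 1)),
      ¬ ContainsCopy R (starGraph n) ∧ ¬ ContainsCopy Rᶜ (fanGraph n) := by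
  have hε : (if Odd n then 0 else 1) = (n + 1) % 2 := by
    split_ifs with h
    · have := Nat.odd_iff.mp h; omega
    · have := Nat.not_odd_iff.mp h; omega
  rw [hε, show 3 * n - 1 - (n + 1) % 2 = n + (2 * n - 1 - (n + 1) % 2) by omega]
  have : NeZero (2 * n - 1 - (n + 1) % 2) := ⟨by omega⟩
  exact exists_coloring_of_cyclePowerGraph n _ ((n - 1) / 2) (by omega) (by omega) (by omega)
    (by omega)
end

section
/- For every odd integer n ≥ 1, there exists a red-blue edge-coloring of the complete graph on 4n + 1 vertices with no monochromatic copy of the fan F_n; consequently R_2(F_n) ≥ 4n + 2 for all odd n ≥ 1. -/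
/-!
Blow up the 5-cycle on `ZMod 5`: keep `0` as a single vertex and replace every `x ≠ 0` by `n`
vertices, a red clique when `x = ±1` and a red independent set when `x = ±2`; vertices of
classes `x`, `x ± 1` are joined in red. Multiplication by `2` maps the 5-cycle onto its
complement, so the colouring is self-complementary and only a red `F_n` has to be excluded.
Every red neighbourhood has exactly `2n` vertices, so the legs of a red `F_n` centred at `c`
would form a perfect matching of it. If `c` lies in a clique class, the other `n - 1` vertices of
that class cover every red edge of the neighbourhood; otherwise the neighbourhood splits, with no
red edge in between, into a part that is a clique of odd size `n` and the rest.
-/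

open Finset Function

variable {α β γ V : Type*}

theorem ContainsCopy.of_comap {G : SimpleGraph β} {H : SimpleGraph γ} (f : α ↪ β)
    (h : ContainsCopy (G.comap f) H) : ContainsCopy G H :=
  let ⟨g, hg⟩ := h
  ⟨g.trans f, fun _ _ hab => hg hab⟩

theorem SimpleGraph.compl_comap {G : SimpleGraph β} {f : α → β} (hf : Injective f) :
    (G.comap f)ᶜ = Gᶜ.comap f := by
  ext u v
  simp [hf.ne_iff]

def NoMonochromaticCopy (G : SimpleGraph α) (H : SimpleGraph β) : Prop :=
  ¬ ContainsCopy G H ∧ ¬ ContainsCopy Gᶜ H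

theorem NoMonochromaticCopy.comap {G : SimpleGraph β} {H : SimpleGraph γ}
    (h : NoMonochromaticCopy G H) (f : α ↪ β) : NoMonochromaticCopy (G.comap f) H :=
  ⟨fun h' => h.1 (h'.of_comap f),
    fun h' => h.2 ((SimpleGraph.compl_comap f.injective ▸ h').of_comap f)⟩

theorem lt_of_noMonochromaticCopy {H : SimpleGraph β} {m N : ℕ}
    (hN : ∀ R : SimpleGraph (Fin N), ContainsCopy R H ∨ ContainsCopy Rᶜ H)
    {G : SimpleGraph (Fin m)} (hG : NoMonochromaticCopy G H) : m < N := by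
  by_contra! hle
  obtain ⟨hred, hblue⟩ := hG.comap (Fin.castLEEmb hle)
  exact (hN _).elim hred hblue

def SimpleGraph.HasFanAt (G : SimpleGraph V) (n : ℕ) (c : V) : Prop :=
  ∃ x y : Fin n → V, Injective (Sum.elim x y) ∧
    ∀ i, G.Adj c (x i) ∧ G.Adj c (y i) ∧ G.Adj (x i) (y i)

theorem ContainsCopy.exists_hasFanAt {G : SimpleGraph V} {n : ℕ}
    (h : ContainsCopy G (fanGraph n)) : ∃ c, G.HasFanAt n c := by
  obtain ⟨f, hf⟩ := h
  let leg : Fin n ⊕ Fin n → Fin (2 * n + 1) :=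
    Sum.elim (fun i => ⟨2 * i + 1, by omega⟩) (fun i => ⟨2 * i + 2, by omega⟩)
  have hleg : Injective leg := by
    rintro (i | i) (j | j) h <;> simp [leg, Fin.ext_iff] at h ⊢ <;> omega
  refine ⟨f 0, f ∘ leg ∘ Sum.inl, f ∘ leg ∘ Sum.inr, ?_, fun i => ⟨hf ?_, hf ?_, hf ?_⟩⟩
  · rw [← Sum.comp_elim, ← Sum.comp_elim, Sum.elim_inl_inr]
    exact f.injective.comp hleg
  · exact ⟨by simp [leg, Fin.ext_iff], .inl rfl⟩
  · exact ⟨by simp [leg, Fin.ext_iff], .inl rfl⟩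
  · refine ⟨by simp [leg, Fin.ext_iff], .inr (.inr ?_)⟩
    simp [leg]
    omega

namespace SimpleGraph.HasFanAt

variable {G : SimpleGraph V} {n : ℕ} {c : V}

theorem le_card_of_cover (h : G.HasFanAt n c) {C : Finset V}
    (hC : ∀ u w, G.Adj c u → G.Adj c w → G.Adj u w → u ∈ C ∨ w ∈ C) : n ≤ #C := by
  classical
  obtain ⟨x, y, hinj, hadj⟩ := h
  let leg : Fin n → Fin n ⊕ Fin n := fun i => if x i ∈ C then .inl i else .inr i
  have hleg : Injective leg := by
    intro i j hij
    simp only [leg] at hij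
    split_ifs at hij <;> simpa using hij
  have hmem : ∀ i, Sum.elim x y (leg i) ∈ C := by
    intro i
    by_cases hi : x i ∈ C
    · simp [leg, hi]
    · simpa [leg, hi] using (hC _ _ (hadj i).1 (hadj i).2.1 (hadj i).2.2).resolve_left hi
  simpa using card_le_card_of_injOn (s := univ) (Sum.elim x y ∘ leg) (fun i _ => hmem i)
    (hinj.comp hleg).injOn

/-- The `2n` legs fill `s`, and the two legs of each triangle lie both in `X` or both outside. -/
theorem even_card_of_separated (h : G.HasFanAt n c) {s X : Finset V}
    (hN : ∀ u, G.Adj c u → u ∈ s) (hs : #s ≤ 2 * n) (hX : X ⊆ s)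
    (hsep : ∀ u w, G.Adj c u → G.Adj c w → G.Adj u w → (u ∈ X ↔ w ∈ X)) : Even #X := by
  classical
  obtain ⟨x, y, hinj, hadj⟩ := h
  have hfill : univ.image (Sum.elim x y) = s := by
    refine eq_of_subset_of_card_le ?_ ?_
    · rintro _ hu
      obtain ⟨i | i, -, rfl⟩ := mem_image.1 hu
      exacts [hN _ (hadj i).1, hN _ (hadj i).2.1]
    · rw [card_image_of_injective _ hinj]
      simpa [two_mul] using hs
  have hXimg : X = (univ.filter (Sum.elim x y · ∈ X)).image (Sum.elim x y) := by
    ext u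
    simp only [mem_image, mem_filter, mem_univ, true_and]
    constructor
    · intro hu
      obtain ⟨z, -, rfl⟩ := mem_image.1 (hfill ▸ hX hu)
      exact ⟨z, hu, rfl⟩
    · rintro ⟨z, hz, rfl⟩
      exact hz
  have hpair : ∀ i, x i ∈ X ↔ y i ∈ X :=
    fun i => hsep _ _ (hadj i).1 (hadj i).2.1 (hadj i).2.2
  rw [hXimg, card_image_of_injective _ hinj, card_filter, Fintype.sum_sum_type]
  simp only [Sum.elim_inl, Sum.elim_inr, hpair]
  exact ⟨_, rfl⟩

end SimpleGraph.HasFanAt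

namespace c5Blowup

def IsPatternEdge (a b : ZMod 5) : Prop :=
  a - b = 1 ∨ b - a = 1 ∨ (a = b ∧ (a = 1 ∨ a = -1))

instance : DecidableRel IsPatternEdge := fun _ _ => inferInstanceAs (Decidable (_ ∨ _))

variable {n : ℕ}

/-- `2` generates `(ZMod 5)ˣ`, so `Fin 4` indexes the classes `x ≠ 0` by their logarithm. -/
def cls : Option (Fin 4 × Fin n) → ZMod 5
  | none => 0
  | some (k, _) => 2 ^ (k : ℕ)

end c5Blowup

open c5Blowup in
def c5Blowup (n : ℕ) : SimpleGraph (Option (Fin 4 × Fin n)) where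
  Adj v w := v ≠ w ∧ IsPatternEdge (cls v) (cls w)
  symm := ⟨fun _ _ h =>
    ⟨h.1.symm, (by decide : ∀ a b, IsPatternEdge a b → IsPatternEdge b a) _ _ h.2⟩⟩
  loopless := ⟨fun _ h => h.1 rfl⟩

namespace c5Blowup

variable {n : ℕ}

theorem cls_eq_zero {v : Option (Fin 4 × Fin n)} : cls v = 0 ↔ v = none := by
  rcases v with _ | ⟨k, i⟩
  · simp [cls]
  · simpa [cls] using (by decide : ∀ k : Fin 4, (2 : ZMod 5) ^ (k : ℕ) ≠ 0) k

def part (n : ℕ) (k : Fin 4) : Finset (Option (Fin 4 × Fin n)) :=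
  univ.image fun i => some (k, i)

theorem card_part (k : Fin 4) : #(part n k) = n := by
  rw [part, card_image_of_injective _ fun i j h => by simpa using h, card_univ, Fintype.card_fin]

theorem mem_part {k : Fin 4} {v : Option (Fin 4 × Fin n)} :
    v ∈ part n k ↔ cls v = 2 ^ (k : ℕ) := by
  rcases v with _ | ⟨l, i⟩
  · simpa [part, cls] using (by decide : ∀ k : Fin 4, (0 : ZMod 5) ≠ 2 ^ (k : ℕ)) k
  · simpa [part, cls, eq_comm] using
      ((by decide : ∀ k l : Fin 4, (2 : ZMod 5) ^ (k : ℕ) = 2 ^ (l : ℕ) ↔ k = l) k l).symm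

def rotate : Option (Fin 4 × Fin n) ≃ Option (Fin 4 × Fin n) :=
  (Equiv.prodCongr (Equiv.addRight 1) (Equiv.refl _)).optionCongr

theorem cls_rotate (v : Option (Fin 4 × Fin n)) : cls (rotate v) = 2 * cls v := by
  rcases v with _ | ⟨k, i⟩
  · simp [rotate, cls]
  · simpa [rotate, cls] using
      (by decide : ∀ k : Fin 4, (2 : ZMod 5) ^ ((k + 1 : Fin 4) : ℕ) = 2 * 2 ^ (k : ℕ)) k

theorem compl_eq_comap_rotate : (c5Blowup n)ᶜ = (c5Blowup n).comap rotate := by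
  ext v w
  by_cases hvw : v = w
  · simp [hvw]
  have hne : cls v ≠ 0 ∨ cls w ≠ 0 := by
    simp only [ne_eq, cls_eq_zero, ← not_and_or]
    rintro ⟨rfl, rfl⟩
    exact hvw rfl
  simp only [SimpleGraph.compl_adj, SimpleGraph.comap_adj, c5Blowup, cls_rotate, ne_eq,
    rotate.injective.eq_iff, hvw, not_false_eq_true, true_and]
  exact ((by decide : ∀ a b : ZMod 5, a ≠ 0 ∨ b ≠ 0 →
    (IsPatternEdge (2 * a) (2 * b) ↔ ¬ IsPatternEdge a b)) _ _ hne).symm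

theorem not_hasFanAt_of_cover {k : Fin 4} {i : Fin n}
    (hcov : ∀ a b, IsPatternEdge (2 ^ (k : ℕ)) a → IsPatternEdge (2 ^ (k : ℕ)) b →
      IsPatternEdge a b → a = 2 ^ (k : ℕ) ∨ b = 2 ^ (k : ℕ)) :
    ¬ (c5Blowup n).HasFanAt n (some (k, i)) := by
  intro h
  have hlt := card_erase_lt_of_mem (mem_part.2 rfl : some (k, i) ∈ part n k)
  refine (h.le_card_of_cover ?_).not_gt (card_part k ▸ hlt)
  rintro u w ⟨hu, hcu⟩ ⟨hw, hcw⟩ ⟨-, huw⟩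
  simp only [mem_erase, mem_part]
  rcases hcov _ _ hcu hcw huw with h | h
  exacts [.inl ⟨hu.symm, h⟩, .inr ⟨hw.symm, h⟩]

theorem not_hasFanAt_of_separated (hodd : Odd n) {c : Option (Fin 4 × Fin n)} {a : ZMod 5}
    (hc : cls c = a) {k l : Fin 4}
    (hN : ∀ b, IsPatternEdge a b → b = 2 ^ (k : ℕ) ∨ b = 2 ^ (l : ℕ))
    (hsep : ∀ b b', IsPatternEdge a b → IsPatternEdge a b' → IsPatternEdge b b' →
      (b = 2 ^ (k : ℕ) ↔ b' = 2 ^ (k : ℕ))) :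
    ¬ (c5Blowup n).HasFanAt n c := by
  subst hc
  intro h
  refine Nat.not_even_iff_odd.2 (card_part k ▸ hodd)
    (h.even_card_of_separated (s := part n k ∪ part n l) ?_ ?_ subset_union_left ?_)
  · rintro u ⟨-, hcu⟩
    simpa [mem_part] using hN _ hcu
  · exact (card_union_le _ _).trans (by simp [card_part, two_mul])
  · rintro u w ⟨-, hcu⟩ ⟨-, hcw⟩ ⟨-, huw⟩
    simpa [mem_part] using hsep _ _ hcu hcw huw

theorem not_hasFanAt (hodd : Odd n) : ∀ c, ¬ (c5Blowup n).HasFanAt n c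
  | none => not_hasFanAt_of_separated hodd (a := 0) rfl (k := 0) (l := 2) (by decide) (by decide)
  | some (k, i) => by
    fin_cases k
    · exact not_hasFanAt_of_cover (by decide)
    · exact not_hasFanAt_of_separated hodd (a := 2) rfl (k := 0) (l := 3) (by decide) (by decide)
    · exact not_hasFanAt_of_cover (by decide)
    · exact not_hasFanAt_of_separated hodd (a := 3) rfl (k := 2) (l := 1) (by decide) (by decide)

end c5Blowup

open c5Blowup in
theorem noMonochromaticCopy_c5Blowup {n : ℕ} (hodd : Odd n) :
    NoMonochromaticCopy (c5Blowup n) (fanGraph n) := by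
  have hred : ¬ ContainsCopy (c5Blowup n) (fanGraph n) := fun h =>
    let ⟨c, hc⟩ := h.exists_hasFanAt
    not_hasFanAt hodd c hc
  refine ⟨hred, fun h => hred ?_⟩
  rw [compl_eq_comap_rotate] at h
  exact h.of_comap rotate.toEmbedding

theorem fan_diag_lower_general (n : ℕ) (hodd : Odd n) :
    (∃ R : SimpleGraph (Fin (4 * n + 1)),
      ¬ ContainsCopy R (fanGraph n) ∧ ¬ ContainsCopy Rᶜ (fanGraph n)) ∧
    ∀ N : ℕ, IsLeast {M : ℕ | ∀ R : SimpleGraph (Fin M),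
      ContainsCopy R (fanGraph n) ∨ ContainsCopy Rᶜ (fanGraph n)} N →
      4 * n + 2 ≤ N := by
  have hcard : Fintype.card (Option (Fin 4 × Fin n)) = 4 * n + 1 := by simp
  have hR := (noMonochromaticCopy_c5Blowup hodd).comap
    (Fintype.equivFinOfCardEq hcard).symm.toEmbedding
  exact ⟨⟨_, hR⟩, fun N hN => lt_of_noMonochromaticCopy hN.1 hR⟩

/-- For every odd `n ≥ 1` there is a red-blue coloring of `K_{4n+1}` with no
monochromatic `F_n`; consequently `R₂(F_n) ≥ 4n + 2` for all odd `n ≥ 1`. -/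
theorem fan_diag_lower (n : ℕ) (hn : 1 ≤ n) (hodd : Odd n) :
    (∃ R : SimpleGraph (Fin (4 * n + 1)),
      ¬ ContainsCopy R (fanGraph n) ∧ ¬ ContainsCopy Rᶜ (fanGraph n)) ∧
    ∀ N : ℕ, IsLeast {M : ℕ | ∀ R : SimpleGraph (Fin M),
      ContainsCopy R (fanGraph n) ∨ ContainsCopy Rᶜ (fanGraph n)} N →
      4 * n + 2 ≤ N :=
  fan_diag_lower_general n hodd
end

section
/- Let G be a complete graph on 14 vertices whose edges are red-blue colored with no monochromatic copy of the fan F_3. Then the coloring contains no monochromatic copy of K_4 + 2K_1 (the join of a complete graph on 4 vertices with an edgeless graph on 2 vertices). -/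
/-- The graph `K₄ + 2K₁`: vertices `0,1,2,3` form a clique and the two further
vertices `4,5` are nonadjacent to each other but adjacent to all of `0,1,2,3`. -/
def K4plus2K1 : SimpleGraph (Fin 6) where
  Adj v w := v ≠ w ∧ (v.val < 4 ∨ w.val < 4)
  symm := by constructor; intro v w h; exact ⟨h.1.symm, h.2.symm⟩
  loopless := by constructor; intro v h; exact h.1 rfl

/-!
Suppose the red graph contains `K₄ + 2K₁` on a vertex set `S`, and let `O` be the other eight
vertices. A vertex of `O` red-adjacent to a `K₄`-vertex of `S` and to one more vertex of `S`
completes a red fan centred at that `K₄`-vertex. So the red neighbourhood in `S` of a vertex of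
`O` is a single vertex or lies in the `2K₁` part, and the red neighbourhoods in `O` of five of the
six vertices of `S` are pairwise disjoint. Hence some vertex of `S` has at most one red neighbour
in `O`, and we derive a monochromatic fan from that.

First, the blue graph on `O` is 2-regular. Two vertices of `O` have at least three common blue
neighbours in `S`, so three blue neighbours in `O` of one vertex could be matched to distinct
common blue neighbours in `S`, giving a blue fan. A vertex with at most one blue neighbour in `O`
has six red neighbours there, on which the red graph has minimum degree three and thus a perfect
matching: a red fan. Now a vertex of `S` with at most one red neighbour in `O` has at least seven
blue neighbours in `O`, spanning a blue graph with all degrees between one and two. Such a graph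
has three disjoint edges, which give a blue fan.
-/

open Finset

lemma Finset.exists_distinct_reps_of_card {α : Type*} [DecidableEq α] {A B C : Finset α}
    (hA : 1 ≤ #A) (hB : 2 ≤ #B) (hC : 3 ≤ #C) :
    ∃ a ∈ A, ∃ b ∈ B, ∃ c ∈ C, a ≠ b ∧ a ≠ c ∧ b ≠ c := by
  obtain ⟨a, ha⟩ := card_pos.mp hA
  obtain ⟨b, hb⟩ := card_pos.mp (show 0 < #(B.erase a) by grind [pred_card_le_card_erase])
  obtain ⟨c, hc⟩ := card_pos.mp (show 0 < #((C.erase a).erase b) by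
    grind [pred_card_le_card_erase])
  simp only [mem_erase] at hb hc
  exact ⟨a, ha, b, hb.2, c, hc.2.2, Ne.symm hb.1, Ne.symm hc.2.1, Ne.symm hc.1⟩

lemma Finset.card_union_le_one_or_exists_ne {α : Type*} [DecidableEq α] {A B : Finset α}
    (hA : #A ≤ 1) (hB : #B ≤ 1) : #(A ∪ B) ≤ 1 ∨ ∃ a ∈ A, ∃ b ∈ B, a ≠ b := by
  by_contra! h
  obtain ⟨x, hx, y, hy, hxy⟩ := one_lt_card.mp h.1
  rw [mem_union] at hx hy
  rcases hx with hx | hx <;> rcases hy with hy | hy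
  · exact hxy (card_le_one.mp hA x hx y hy)
  · exact hxy (h.2 x hx y hy)
  · exact hxy (h.2 y hy x hx).symm
  · exact hxy (card_le_one.mp hB x hx y hy)

lemma Finset.card_compl_map_univ {α β : Type*} [Fintype α] [Fintype β] [DecidableEq β]
    (f : α ↪ β) : #(univ.map f)ᶜ = Fintype.card β - Fintype.card α := by
  rw [card_compl, card_map, card_univ]

lemma K4plus2K1.exists_disjoint_edges_avoiding (i j : Fin 6) (hi : i.val < 4) (hij : i ≠ j) :
    ∃ k₁ k₂ k₃ k₄ : Fin 6, [i, j, k₁, k₂, k₃, k₄].Nodup ∧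
      K4plus2K1.Adj k₁ k₂ ∧ K4plus2K1.Adj k₃ k₄ := by
  revert i j
  unfold K4plus2K1
  decide

namespace SimpleGraph

variable {V : Type*}

def HasThreeDisjointEdges (G : SimpleGraph V) (s : Set V) : Prop :=
  ∃ x₁ y₁ x₂ y₂ x₃ y₃ : V, [x₁, y₁, x₂, y₂, x₃, y₃].Nodup ∧
    (∀ v ∈ [x₁, y₁, x₂, y₂, x₃, y₃], v ∈ s) ∧ G.Adj x₁ y₁ ∧ G.Adj x₂ y₂ ∧ G.Adj x₃ y₃

variable {G : SimpleGraph V}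

lemma HasThreeDisjointEdges.mono {s t : Set V} (h : G.HasThreeDisjointEdges s) (hst : s ⊆ t) :
    G.HasThreeDisjointEdges t := by
  obtain ⟨x₁, y₁, x₂, y₂, x₃, y₃, hnd, hs, h₁, h₂, h₃⟩ := h
  exact ⟨x₁, y₁, x₂, y₂, x₃, y₃, hnd, fun v hv => hst (hs v hv), h₁, h₂, h₃⟩

lemma HasThreeDisjointEdges.containsCopy_fanGraph {c : V}
    (h : G.HasThreeDisjointEdges (G.neighborSet c)) : ContainsCopy G (fanGraph 3) := by
  obtain ⟨x₁, y₁, x₂, y₂, x₃, y₃, hnd, hc, h₁, h₂, h₃⟩ := h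
  simp only [List.mem_cons, List.not_mem_nil, or_false, forall_eq_or_imp, forall_eq,
    mem_neighborSet] at hc
  have hinj : Function.Injective ![c, x₁, y₁, x₂, y₂, x₃, y₃] := by
    rw [← List.nodup_ofFn]
    change (c :: [x₁, y₁, x₂, y₂, x₃, y₃]).Nodup
    refine List.nodup_cons.mpr ⟨?_, hnd⟩
    simp only [List.mem_cons, List.not_mem_nil, or_false]
    grind [Adj.ne]
  refine ⟨⟨_, hinj⟩, fun a b hab => ?_⟩
  fin_cases a <;> fin_cases b <;> simp_all [fanGraph, adj_comm]

variable [DecidableEq V] [DecidableRel G.Adj]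

lemma card_filter_not_adj_le {s t : Finset V} (hts : t ⊆ s) (x : V) :
    #{w ∈ t | ¬ G.Adj x w} ≤ #{w ∈ s | Gᶜ.Adj x w} + 1 := by
  refine (card_le_card fun w hw => ?_).trans (card_insert_le x _)
  simp only [mem_filter, mem_insert, compl_adj] at hw ⊢
  by_cases hxw : x = w
  · exact Or.inl hxw.symm
  · exact Or.inr ⟨hts hw.1, hxw, hw.2⟩

lemma exists_adj_mem_of_card_eq_six {s : Finset V} (hs : #s = 6)
    (hdeg : ∀ u ∈ s, 3 ≤ #{w ∈ s | G.Adj u w}) {u : V} (hu : u ∈ s) {A : Finset V}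
    (hA : A ⊆ s.erase u) (hA3 : 3 ≤ #A) : ∃ w ∈ A, G.Adj u w := by
  have hN : {w ∈ s | G.Adj u w} ⊆ s.erase u := fun w hw => by
    simp only [mem_filter] at hw
    exact mem_erase.mpr ⟨hw.2.ne.symm, hw.1⟩
  obtain ⟨w, hw⟩ := inter_nonempty_of_card_lt_card_add_card hA hN (by
    rw [card_erase_of_mem hu, hs]; have := hdeg u hu; omega)
  simp only [mem_inter, mem_filter] at hw
  exact ⟨w, hw.1, hw.2.2⟩

lemma adj_or_adj_of_not_adj {s : Finset V} (hs : #s = 6)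
    (hdeg : ∀ u ∈ s, 3 ≤ #{w ∈ s | G.Adj u w}) {x y z w : V} (hnd : [x, y, z, w].Nodup)
    (hmem : ∀ v ∈ [x, y, z, w], v ∈ s) (hxw : ¬ G.Adj x w) : G.Adj x y ∨ G.Adj x z := by
  simp only [List.nodup_cons, List.mem_cons, List.not_mem_nil, or_false, forall_eq_or_imp,
    forall_eq] at hnd hmem
  obtain ⟨v, hv, hxv⟩ := exists_adj_mem_of_card_eq_six hs hdeg hmem.1 (A := {y, z, w})
    (by intro v hv; simp only [mem_insert, mem_singleton, mem_erase] at hv ⊢; grind)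
    (card_eq_three.mpr ⟨y, z, w, by grind, by grind, by grind, rfl⟩).ge
  simp only [mem_insert, mem_singleton] at hv
  grind

lemma hasThreeDisjointEdges_of_card_eq_six {s : Finset V} (hs : #s = 6)
    (hdeg : ∀ u ∈ s, 3 ≤ #{w ∈ s | G.Adj u w}) : G.HasThreeDisjointEdges s := by
  obtain ⟨a, ha⟩ : s.Nonempty := by rw [← card_pos]; omega
  obtain ⟨b, hb⟩ := card_pos.mp (show 0 < #{w ∈ s | G.Adj a w} by have := hdeg a ha; omega)
  rw [mem_filter] at hb
  set T := (s.erase a).erase b with hT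
  have hTcard : #T = 4 := by
    rw [hT, card_erase_of_mem (mem_erase.mpr ⟨hb.2.ne.symm, hb.1⟩), card_erase_of_mem ha, hs]
  obtain ⟨p, hp⟩ : T.Nonempty := by rw [← card_pos]; omega
  obtain ⟨q, hq, hpq⟩ := exists_adj_mem_of_card_eq_six hs hdeg (by simp [hT] at hp; exact hp.2.2)
    (A := T.erase p) (fun x hx => by simp [hT] at hx ⊢; tauto) (by rw [card_erase_of_mem hp]; omega)
  obtain ⟨u, u', huu', hU⟩ := card_eq_two.mp (show #((T.erase p).erase q) = 2 by
    rw [card_erase_of_mem hq, card_erase_of_mem hp, hTcard])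
  have hu : u ∈ (T.erase p).erase q := by simp [hU]
  have hu' : u' ∈ (T.erase p).erase q := by simp [hU]
  simp only [hT, mem_erase] at hp hq hu hu'
  have := hb.2.ne; have := hpq.ne
  by_cases huu : G.Adj u u'
  · exact ⟨a, b, p, q, u, u', by simp; grind, by simp; grind, hb.2, hpq, huu⟩
  have hsee : ∀ {x y z w}, [x, y, z, w] ⊆ [a, b, p, q, u, u'] → [x, y, z, w].Nodup →
      ¬ G.Adj x w → G.Adj x y ∨ G.Adj x z := fun hsub hnd hxw =>
    adj_or_adj_of_not_adj hs hdeg hnd (fun v hv => by have := hsub hv; simp at this; grind) hxw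
  -- `u` and `u'` are nonadjacent, so each of them misses at most one of `a, b, p, q`.
  have hu : (G.Adj u a ∧ G.Adj u b) ∨ (G.Adj u p ∧ G.Adj u q) := by
    have := hsee (x := u) (y := a) (z := p) (w := u') (by simp) (by simp; grind) huu
    have := hsee (x := u) (y := a) (z := q) (w := u') (by simp) (by simp; grind) huu
    have := hsee (x := u) (y := b) (z := p) (w := u') (by simp) (by simp; grind) huu
    have := hsee (x := u) (y := b) (z := q) (w := u') (by simp) (by simp; grind) huu
    tauto
  rcases hu with ⟨hua, hub⟩ | ⟨hup, huq⟩
  · rcases hsee (x := u') (y := a) (z := b) (w := u) (by simp) (by simp; grind) (huu ·.symm)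
      with h | h
    · exact ⟨u, b, u', a, p, q, by simp; grind, by simp; grind, hub, h, hpq⟩
    · exact ⟨u, a, u', b, p, q, by simp; grind, by simp; grind, hua, h, hpq⟩
  · rcases hsee (x := u') (y := p) (z := q) (w := u) (by simp) (by simp; grind) (huu ·.symm)
      with h | h
    · exact ⟨u, q, u', p, a, b, by simp; grind, by simp; grind, huq, h, hb.2⟩
    · exact ⟨u, p, u', q, a, b, by simp; grind, by simp; grind, hup, h, hb.2⟩

lemma card_filter_adj_le_one {s : Finset V} (hle : ∀ u ∈ s, #{w ∈ s | G.Adj u w} ≤ 2)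
    {x y : V} {I : Finset V} (hx : x ∈ s) (hy : y ∈ s) (hxy : G.Adj x y) (hI : I ⊆ s)
    (hyI : y ∉ I) : #{w ∈ I | G.Adj x w} ≤ 1 := by
  have hsub : {w ∈ I | G.Adj x w} ⊆ {w ∈ s | G.Adj x w}.erase y := by
    intro w hw
    simp only [mem_filter, mem_erase] at hw ⊢
    exact ⟨fun h => hyI (h ▸ hw.1), hI hw.1, hw.2⟩
  have := card_le_card hsub
  rw [card_erase_of_mem (by simp [hy, hxy])] at this
  have := hle x hx
  omega

lemma exists_adj_mem_sdiff {s I : Finset V} (hpos : ∀ u ∈ s, 1 ≤ #{w ∈ s | G.Adj u w})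
    (hI : I ⊆ s) (hind : ∀ x ∈ I, ∀ y ∈ I, ¬ G.Adj x y) {x : V} (hx : x ∈ I) :
    ∃ y ∈ s \ I, G.Adj x y := by
  obtain ⟨y, hy⟩ := card_pos.mp (hpos x (hI hx))
  rw [mem_filter] at hy
  exact ⟨y, mem_sdiff.mpr ⟨hy.1, fun h => hind x hx y h hy.2⟩, hy.2⟩

lemma hasThreeDisjointEdges_of_adj_of_adj {s : Finset V}
    (hpos : ∀ u ∈ s, 1 ≤ #{w ∈ s | G.Adj u w}) (hle : ∀ u ∈ s, #{w ∈ s | G.Adj u w} ≤ 2)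
    {a₁ b₁ a₂ b₂ : V} (hnd : [a₁, b₁, a₂, b₂].Nodup) (hmem : ∀ v ∈ [a₁, b₁, a₂, b₂], v ∈ s)
    (h₁ : G.Adj a₁ b₁) (h₂ : G.Adj a₂ b₂) (hs : 7 ≤ #s) : G.HasThreeDisjointEdges s := by
  simp only [List.nodup_cons, List.mem_cons, List.not_mem_nil, or_false, forall_eq_or_imp,
    forall_eq] at hnd hmem
  have hIcard : 3 ≤ #(s \ {a₁, b₁, a₂, b₂}) := by
    have := le_card_sdiff {a₁, b₁, a₂, b₂} s
    have := card_le_four (a := a₁) (b := b₁) (c := a₂) (d := b₂)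
    omega
  set I := s \ {a₁, b₁, a₂, b₂} with hI_def
  have hIs : I ⊆ s := sdiff_subset
  have hmemI : ∀ {v}, v ∈ I ↔ v ∈ s ∧ v ≠ a₁ ∧ v ≠ b₁ ∧ v ≠ a₂ ∧ v ≠ b₂ := by
    simp [hI_def]
  by_cases hedge : ∃ x ∈ I, ∃ y ∈ I, G.Adj x y
  · obtain ⟨x, hx, y, hy, hxy⟩ := hedge
    rw [hmemI] at hx hy
    exact ⟨a₁, b₁, a₂, b₂, x, y, by simp; grind [Adj.ne], by simp; grind, h₁, h₂, hxy⟩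
  push Not at hedge
  have hcov : I ⊆ ({w ∈ I | G.Adj a₁ w} ∪ {w ∈ I | G.Adj b₁ w}) ∪
      ({w ∈ I | G.Adj a₂ w} ∪ {w ∈ I | G.Adj b₂ w}) := by
    intro x hx
    obtain ⟨y, hy, hxy⟩ := exists_adj_mem_sdiff hpos hIs hedge hx
    simp only [hI_def, mem_sdiff, mem_insert, mem_singleton, not_or] at hy
    simp only [mem_union, mem_filter]
    grind [adj_comm]
  -- For each of the two edges, either its ends see at most one vertex of `I` in total, or it can
  -- be traded for two disjoint edges into `I`.
  rcases card_union_le_one_or_exists_ne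
      (card_filter_adj_le_one hle hmem.1 hmem.2.1 h₁ hIs (by simp [hI_def]))
      (card_filter_adj_le_one hle hmem.2.1 hmem.1 h₁.symm hIs (by simp [hI_def]))
    with hc₁ | ⟨i, hi, i', hi', hii'⟩
  · rcases card_union_le_one_or_exists_ne
        (card_filter_adj_le_one hle hmem.2.2.1 hmem.2.2.2 h₂ hIs (by simp [hI_def]))
        (card_filter_adj_le_one hle hmem.2.2.2 hmem.2.2.1 h₂.symm hIs (by simp [hI_def]))
      with hc₂ | ⟨i, hi, i', hi', hii'⟩
    · have := card_le_card hcov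
      have := card_union_le ({w ∈ I | G.Adj a₁ w} ∪ {w ∈ I | G.Adj b₁ w})
        ({w ∈ I | G.Adj a₂ w} ∪ {w ∈ I | G.Adj b₂ w})
      omega
    · simp only [mem_filter, hmemI] at hi hi'
      exact ⟨a₂, i, b₂, i', a₁, b₁, by simp; grind [Adj.ne], by simp; grind, hi.2, hi'.2, h₁⟩
  · simp only [mem_filter, hmemI] at hi hi'
    exact ⟨a₁, i, b₁, i', a₂, b₂, by simp; grind [Adj.ne], by simp; grind, hi.2, hi'.2, h₂⟩

lemma hasThreeDisjointEdges_of_seven_le_card {s : Finset V} (hs : 7 ≤ #s)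
    (hpos : ∀ u ∈ s, 1 ≤ #{w ∈ s | G.Adj u w}) (hle : ∀ u ∈ s, #{w ∈ s | G.Adj u w} ≤ 2) :
    G.HasThreeDisjointEdges s := by
  obtain ⟨a, ha⟩ : s.Nonempty := by rw [← card_pos]; omega
  obtain ⟨b, hb⟩ := card_pos.mp (hpos a ha)
  rw [mem_filter] at hb
  have hI : 5 ≤ #(s \ {a, b}) := by
    have := le_card_sdiff {a, b} s
    have := card_le_two (a := a) (b := b)
    omega
  obtain ⟨p, hp, q, hq, hpq⟩ : ∃ p ∈ s \ {a, b}, ∃ q ∈ s \ {a, b}, G.Adj p q := by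
    by_contra! hind
    have hsub : s \ {a, b} ⊆ {w ∈ s \ {a, b} | G.Adj a w} ∪ {w ∈ s \ {a, b} | G.Adj b w} := by
      intro x hx
      obtain ⟨y, hy, hxy⟩ := exists_adj_mem_sdiff hpos sdiff_subset hind hx
      simp only [sdiff_sdiff_right_self, inf_eq_inter, mem_inter, mem_insert, mem_singleton] at hy
      simp only [mem_union, mem_filter]
      grind [adj_comm]
    have := card_le_card hsub
    have := card_union_le {w ∈ s \ {a, b} | G.Adj a w} {w ∈ s \ {a, b} | G.Adj b w}
    have := card_filter_adj_le_one hle ha hb.1 hb.2 (I := s \ {a, b}) sdiff_subset (by simp)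
    have := card_filter_adj_le_one hle hb.1 ha hb.2.symm (I := s \ {a, b}) sdiff_subset (by simp)
    omega
  simp only [mem_sdiff, mem_insert, mem_singleton, not_or] at hp hq
  refine hasThreeDisjointEdges_of_adj_of_adj hpos hle (a₁ := a) (b₁ := b) (a₂ := p) (b₂ := q)
    (by simp; grind [Adj.ne]) (by simp; grind) hb.2 hpq hs

end SimpleGraph

open SimpleGraph

section
variable {V : Type*} {G : SimpleGraph V} {f : Fin 6 ↪ V}

lemma not_adj_of_adj_of_lt_four (hf : K4plus2K1 ≤ G.comap f)
    (hF : ¬ ContainsCopy G (fanGraph 3)) {v : V} (hv : v ∉ univ.map f) {i j : Fin 6}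
    (hi : i.val < 4) (hij : i ≠ j) (hvi : G.Adj (f i) v) : ¬ G.Adj (f j) v := by
  intro hvj
  obtain ⟨k₁, k₂, k₃, k₄, hnd, h₁₂, h₃₄⟩ :=
    K4plus2K1.exists_disjoint_edges_avoiding i j hi hij
  have hadj : ∀ k, i ≠ k → G.Adj (f i) (f k) := fun k hik => hf ⟨hik, Or.inl hi⟩
  simp only [mem_map, mem_univ, true_and, not_exists] at hv
  simp only [List.nodup_cons, List.mem_cons, List.not_mem_nil, or_false] at hnd
  refine hF (HasThreeDisjointEdges.containsCopy_fanGraph (c := f i)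
    ⟨v, f j, f k₁, f k₂, f k₃, f k₄, ?_, ?_, hvj.symm, hf h₁₂, hf h₃₄⟩)
  · simp only [List.nodup_cons, List.mem_cons, List.not_mem_nil, or_false,
      EmbeddingLike.apply_eq_iff_eq]
    grind
  · simp only [List.mem_cons, List.not_mem_nil, or_false, forall_eq_or_imp, forall_eq,
      mem_neighborSet]
    grind

variable [DecidableRel G.Adj]

variable (G f) in
def adjIndices (v : V) : Finset (Fin 6) := {k | G.Adj (f k) v}

lemma adjIndices_subset (hf : K4plus2K1 ≤ G.comap f)
    (hF : ¬ ContainsCopy G (fanGraph 3)) {v : V} (hv : v ∉ univ.map f) :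
    adjIndices G f v ⊆ {4, 5} ∨ ∃ i, adjIndices G f v ⊆ {i} := by
  by_cases h : ∃ i : Fin 6, i.val < 4 ∧ G.Adj (f i) v
  · obtain ⟨i, hi, hvi⟩ := h
    refine Or.inr ⟨i, fun k hk => mem_singleton.mpr ?_⟩
    by_contra hki
    exact not_adj_of_adj_of_lt_four hf hF hv hi (Ne.symm hki) hvi (by simpa [adjIndices] using hk)
  · refine Or.inl fun k hk => ?_
    have : ¬ k.val < 4 := fun hk4 => h ⟨k, hk4, by simpa [adjIndices] using hk⟩
    fin_cases k <;> simp_all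

lemma card_adjIndices_union_le (hf : K4plus2K1 ≤ G.comap f)
    (hF : ¬ ContainsCopy G (fanGraph 3)) {u w : V} (hu : u ∉ univ.map f) (hw : w ∉ univ.map f) :
    #(adjIndices G f u ∪ adjIndices G f w) ≤ 3 := by
  have hcard : ∀ {v}, v ∉ univ.map f → #(adjIndices G f v) ≤ 1 ∨ adjIndices G f v ⊆ {4, 5} := by
    intro v hv
    rcases adjIndices_subset hf hF hv with h | ⟨i, h⟩
    · exact Or.inr h
    · exact Or.inl ((card_le_card h).trans (card_singleton i).le)
  have h45 : #({4, 5} : Finset (Fin 6)) = 2 := rfl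
  have := card_union_le (adjIndices G f u) (adjIndices G f w)
  rcases hcard hu with hu | hu <;> rcases hcard hw with hw | hw
  · omega
  · have := card_le_card hw; omega
  · have := card_le_card hu; omega
  · have := card_le_card (union_subset hu hw); omega

variable [Fintype V] [DecidableEq V]

lemma disjoint_filter_adj (hf : K4plus2K1 ≤ G.comap f) (hF : ¬ ContainsCopy G (fanGraph 3))
    {i j : Fin 6} (hij : i ≠ j) (h : i.val < 4 ∨ j.val < 4) :
    Disjoint {v ∈ (univ.map f)ᶜ | G.Adj (f i) v} {v ∈ (univ.map f)ᶜ | G.Adj (f j) v} := by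
  rw [disjoint_filter]
  intro v hv hvi hvj
  rcases h with hi | hj
  · exact not_adj_of_adj_of_lt_four hf hF (mem_compl.mp hv) hi hij hvi hvj
  · exact not_adj_of_adj_of_lt_four hf hF (mem_compl.mp hv) hj (Ne.symm hij) hvj hvi

lemma card_compl_adj_le_two (hf : K4plus2K1 ≤ G.comap f)
    (hF : ¬ ContainsCopy G (fanGraph 3)) (hFc : ¬ ContainsCopy Gᶜ (fanGraph 3)) {u : V}
    (hu : u ∉ univ.map f) : #{w ∈ (univ.map f)ᶜ | Gᶜ.Adj u w} ≤ 2 := by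
  by_contra! h
  obtain ⟨w₁, hw₁, w₂, hw₂, w₃, hw₃, h₁₂, h₁₃, h₂₃⟩ := two_lt_card.mp h
  simp only [mem_filter, mem_compl] at hw₁ hw₂ hw₃
  have hcommon : ∀ {w}, w ∉ univ.map f → 3 ≤ #(adjIndices G f u ∪ adjIndices G f w)ᶜ := by
    intro w hw
    rw [card_compl, Fintype.card_fin]
    have := card_adjIndices_union_le hf hF hu hw
    omega
  obtain ⟨k₁, hk₁, k₂, hk₂, k₃, hk₃, hk₁₂, hk₁₃, hk₂₃⟩ := exists_distinct_reps_of_card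
    ((hcommon hw₁.1).trans' (by norm_num)) ((hcommon hw₂.1).trans' (by norm_num)) (hcommon hw₃.1)
  simp only [adjIndices, mem_compl, mem_union, mem_filter, mem_univ, true_and, not_or]
    at hk₁ hk₂ hk₃
  simp only [mem_map, mem_univ, true_and, not_exists, compl_adj] at hu hw₁ hw₂ hw₃
  refine hFc (HasThreeDisjointEdges.containsCopy_fanGraph (c := u)
    ⟨f k₁, w₁, f k₂, w₂, f k₃, w₃, ?_, ?_, ?_, ?_, ?_⟩)
  · simp only [List.nodup_cons, List.mem_cons, List.not_mem_nil, or_false,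
      EmbeddingLike.apply_eq_iff_eq]
    grind
  · simp only [List.mem_cons, List.not_mem_nil, or_false, forall_eq_or_imp, forall_eq,
      mem_neighborSet, compl_adj]
    grind [adj_comm]
  all_goals simp only [compl_adj]; grind [adj_comm]

lemma two_le_card_compl_adj (hf : K4plus2K1 ≤ G.comap f)
    (hF : ¬ ContainsCopy G (fanGraph 3)) (hFc : ¬ ContainsCopy Gᶜ (fanGraph 3))
    (hV : Fintype.card V = 14) (u : V) : 2 ≤ #{w ∈ (univ.map f)ᶜ | Gᶜ.Adj u w} := by
  by_contra! h
  have hO : #(univ.map f)ᶜ = 8 := by rw [card_compl_map_univ, hV, Fintype.card_fin]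
  have hred : 6 ≤ #{w ∈ (univ.map f)ᶜ | G.Adj u w} := by
    have := card_filter_add_card_filter_not (s := (univ.map f)ᶜ) (fun w => G.Adj u w)
    have := card_filter_not_adj_le (G := G) (subset_refl (univ.map f)ᶜ) u
    omega
  obtain ⟨t, hts, ht⟩ := exists_subset_card_eq hred
  have htO : t ⊆ (univ.map f)ᶜ := hts.trans (filter_subset _ _)
  have hdeg : ∀ x ∈ t, 3 ≤ #{w ∈ t | G.Adj x w} := by
    intro x hx
    have := card_filter_add_card_filter_not (s := t) (fun w => G.Adj x w)
    have := card_filter_not_adj_le (G := G) htO x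
    have := card_compl_adj_le_two hf hF hFc (mem_compl.mp (htO hx))
    omega
  have htnbr : (t : Set V) ⊆ G.neighborSet u := fun w hw => (mem_filter.mp (hts hw)).2
  exact hF ((hasThreeDisjointEdges_of_card_eq_six ht hdeg).mono htnbr).containsCopy_fanGraph

lemma two_le_card_adj (hf : K4plus2K1 ≤ G.comap f)
    (hF : ¬ ContainsCopy G (fanGraph 3)) (hFc : ¬ ContainsCopy Gᶜ (fanGraph 3))
    (hV : Fintype.card V = 14) (k : Fin 6) : 2 ≤ #{v ∈ (univ.map f)ᶜ | G.Adj (f k) v} := by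
  by_contra! h
  have hO : #(univ.map f)ᶜ = 8 := by rw [card_compl_map_univ, hV, Fintype.card_fin]
  set O' := {v ∈ (univ.map f)ᶜ | ¬ G.Adj (f k) v} with hO'
  have hO'card : 7 ≤ #O' := by
    have := card_filter_add_card_filter_not (s := (univ.map f)ᶜ) (fun v => G.Adj (f k) v)
    rw [← hO'] at this
    omega
  have hO'O : O' ⊆ (univ.map f)ᶜ := filter_subset _ _
  have hle : ∀ x ∈ O', #{w ∈ O' | Gᶜ.Adj x w} ≤ 2 := fun x hx =>
    (card_le_card (filter_subset_filter _ hO'O)).trans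
      (card_compl_adj_le_two hf hF hFc (mem_compl.mp (hO'O hx)))
  have hpos : ∀ x ∈ O', 1 ≤ #{w ∈ O' | Gᶜ.Adj x w} := by
    intro x hx
    have hsub : {w ∈ (univ.map f)ᶜ | Gᶜ.Adj x w} ⊆
        {w ∈ O' | Gᶜ.Adj x w} ∪ {v ∈ (univ.map f)ᶜ | G.Adj (f k) v} := by
      intro w hw
      simp only [hO', mem_union, mem_filter] at hw ⊢
      tauto
    have := card_le_card hsub
    have := card_union_le {w ∈ O' | Gᶜ.Adj x w} {v ∈ (univ.map f)ᶜ | G.Adj (f k) v}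
    have := two_le_card_compl_adj hf hF hFc hV x
    omega
  have hO'nbr : (O' : Set V) ⊆ Gᶜ.neighborSet (f k) := by
    intro v hv
    simp only [hO', coe_filter, Set.mem_ofPred_eq, mem_compl, mem_map, mem_univ, true_and,
      not_exists] at hv
    exact ⟨hv.1 k, hv.2⟩
  exact hFc ((hasThreeDisjointEdges_of_seven_le_card hO'card hpos hle).mono
    hO'nbr).containsCopy_fanGraph

end

theorem not_containsCopy_K4plus2K1 {V : Type*} [Fintype V] (hV : Fintype.card V = 14)
    (G : SimpleGraph V) (hF : ¬ ContainsCopy G (fanGraph 3))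
    (hFc : ¬ ContainsCopy Gᶜ (fanGraph 3)) : ¬ ContainsCopy G K4plus2K1 := by
  classical
  rintro ⟨f, hf⟩
  let K : Finset (Fin 6) := {0, 1, 2, 3, 4}
  let red : Fin 6 → Finset V := fun k => {v ∈ (univ.map f)ᶜ | G.Adj (f k) v}
  have hdisj : (K : Set (Fin 6)).PairwiseDisjoint red := fun i hi j hj hij =>
    disjoint_filter_adj hf hF hij (by simp [K] at hi hj; omega)
  have hlower : 5 * 2 ≤ #(K.biUnion red) := by
    rw [card_biUnion hdisj]
    exact card_nsmul_le_sum K _ 2 fun k _ => two_le_card_adj hf hF hFc hV k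
  have hupper : #(K.biUnion red) ≤ #(univ.map f)ᶜ :=
    card_le_card (biUnion_subset.mpr fun k _ => filter_subset _ _)
  rw [card_compl_map_univ, hV, Fintype.card_fin] at hupper
  omega

/-- A red-blue coloring of `K₁₄` with no monochromatic `F₃` contains no
monochromatic copy of `K₄ + 2K₁`. -/
theorem no_mono_K4_2K1 (R : SimpleGraph (Fin 14))
    (hred : ¬ ContainsCopy R (fanGraph 3)) (hblue : ¬ ContainsCopy Rᶜ (fanGraph 3)) :
    ¬ ContainsCopy R K4plus2K1 ∧ ¬ ContainsCopy Rᶜ K4plus2K1 :=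
  ⟨not_containsCopy_K4plus2K1 (Fintype.card_fin 14) R hred hblue,
    not_containsCopy_K4plus2K1 (Fintype.card_fin 14) Rᶜ hblue (by rwa [compl_compl])⟩
end

section
/- Let G be a complete graph on 14 vertices whose edges are red-blue colored with no monochromatic copy of the fan F_3, and let H be a set of 5 vertices inducing a blue complete graph K_5, with K = V(G) \ H. Then for any two vertices v_1, v_2 of K that have a common blue neighbor in H and that each have at least 2 blue neighbors in H, the union of the blue neighborhoods of v_1 and v_2 in H has exactly 2 elements. -/
/-! If the union had a third vertex, take a common blue neighbour `a` of `v₁` and `v₂` in `H`,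
blue neighbours `p ≠ a` of `v₁` and `q ≠ a` of `v₂` in `H` with `p ≠ q`, and the two remaining
vertices `d, e` of `H`. Then `a` is the centre of a blue fan whose blades are `v₁p`, `v₂q` and
`de`. -/

theorem containsCopy_fanGraph_three {V : Type*} {G : SimpleGraph V} {c x₁ y₁ x₂ y₂ x₃ y₃ : V}
    (hnodup : [c, x₁, y₁, x₂, y₂, x₃, y₃].Nodup)
    (hc : ∀ v ∈ [x₁, y₁, x₂, y₂, x₃, y₃], G.Adj c v)
    (h₁ : G.Adj x₁ y₁) (h₂ : G.Adj x₂ y₂) (h₃ : G.Adj x₃ y₃) :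
    ContainsCopy G (fanGraph 3) := by
  refine ⟨⟨![c, x₁, y₁, x₂, y₂, x₃, y₃],
    List.nodup_ofFn.mp (by simpa [List.ofFn_succ] using hnodup)⟩, ?_⟩
  intro i j h
  fin_cases i <;> fin_cases j <;> simp_all [fanGraph, G.adj_comm]

theorem Set.exists_mem_mem_ne_of_two_le_ncard_union {α : Type*} {s t : Set α}
    (hs : 1 ≤ s.ncard) (ht : 1 ≤ t.ncard) (hst : 2 ≤ (s ∪ t).ncard) :
    ∃ p ∈ s, ∃ q ∈ t, p ≠ q := by
  obtain ⟨p, hp⟩ := Set.nonempty_of_ncard_ne_zero (s := s) (by omega)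
  obtain ⟨q, hq⟩ := Set.nonempty_of_ncard_ne_zero (s := t) (by omega)
  by_contra! hall
  have : s ∪ t ⊆ {q} := by
    rintro x (hx | hx)
    · exact hall x hx q hq
    · exact (hall p hp x hx).symm.trans (hall p hp q hq)
  have := (Set.ncard_le_ncard this).trans (Set.ncard_singleton q).le
  omega

theorem Finset.exists_ne_mem_sdiff_of_card_add_two_le {α : Type*} [DecidableEq α] {s t : Finset α}
    (h : t.card + 2 ≤ s.card) : ∃ d ∈ s \ t, ∃ e ∈ s \ t, d ≠ e :=
  Finset.one_lt_card.mp (by have := Finset.le_card_sdiff t s; omega)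

theorem blue_nbhd_union_eq_two_general (R : SimpleGraph (Fin 14))
    (hblue : ¬ ContainsCopy Rᶜ (fanGraph 3))
    (H : Finset (Fin 14)) (hH : H.card = 5)
    (hK5 : ∀ a ∈ H, ∀ b ∈ H, a ≠ b → Rᶜ.Adj a b)
    (v₁ v₂ : Fin 14) (hv₁ : v₁ ∉ H) (hv₂ : v₂ ∉ H) (hne : v₁ ≠ v₂)
    (hcommon : 1 ≤ ({h : Fin 14 | h ∈ H ∧ Rᶜ.Adj v₁ h} ∩ {h : Fin 14 | h ∈ H ∧ Rᶜ.Adj v₂ h}).ncard)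
    (h₁ : 2 ≤ {h : Fin 14 | h ∈ H ∧ Rᶜ.Adj v₁ h}.ncard)
    (h₂ : 2 ≤ {h : Fin 14 | h ∈ H ∧ Rᶜ.Adj v₂ h}.ncard) :
    ({h : Fin 14 | h ∈ H ∧ Rᶜ.Adj v₁ h} ∪ {h : Fin 14 | h ∈ H ∧ Rᶜ.Adj v₂ h}).ncard = 2 := by
  set N₁ : Set (Fin 14) := {h | h ∈ H ∧ Rᶜ.Adj v₁ h}
  set N₂ : Set (Fin 14) := {h | h ∈ H ∧ Rᶜ.Adj v₂ h}
  refine le_antisymm ?_ (h₁.trans (Set.ncard_le_ncard Set.subset_union_left))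
  by_contra! hgt
  obtain ⟨a, ha₁, ha₂⟩ := Set.nonempty_of_ncard_ne_zero (s := N₁ ∩ N₂) (by omega)
  obtain ⟨p, ⟨⟨hpH, hp⟩, hpa⟩, q, ⟨⟨hqH, hq⟩, hqa⟩, hpq⟩ :=
    Set.exists_mem_mem_ne_of_two_le_ncard_union (s := N₁ \ {a}) (t := N₂ \ {a})
      (by rw [Set.ncard_sdiff_singleton_of_mem ha₁]; omega)
      (by rw [Set.ncard_sdiff_singleton_of_mem ha₂]; omega)
      (by rw [← Set.union_sdiff_distrib,
        Set.ncard_sdiff_singleton_of_mem (s := N₁ ∪ N₂) (Or.inl ha₁)]; omega)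
  obtain ⟨d, hd, e, he, hde⟩ :=
    Finset.exists_ne_mem_sdiff_of_card_add_two_le (s := H) (t := {a, p, q})
      (by have := Finset.card_le_three (a := a) (b := p) (c := q); omega)
  simp only [Finset.mem_sdiff, Finset.mem_insert, Finset.mem_singleton, not_or] at hd he
  have haH : a ∈ H := ha₁.1
  refine hblue (containsCopy_fanGraph_three (c := a) (x₁ := v₁) (y₁ := p) (x₂ := v₂) (y₂ := q)
    (x₃ := d) (y₃ := e) ?_ ?_ hp hq (hK5 d hd.1 e he.1 hde))
  · simp only [List.nodup_cons, List.mem_cons, List.not_mem_nil, or_false, not_or]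
    grind
  · simp only [List.mem_cons, List.not_mem_nil, or_false, forall_eq_or_imp, forall_eq]
    exact ⟨ha₁.2.symm, hK5 a haH p hpH (Ne.symm hpa), ha₂.2.symm, hK5 a haH q hqH (Ne.symm hqa),
      hK5 a haH d hd.1 (Ne.symm hd.2.1), hK5 a haH e he.1 (Ne.symm he.2.1)⟩

/-- In a red-blue coloring of `K₁₄` with no monochromatic `F₃` and a blue `K₅` on
a 5-set `H`: if two distinct vertices outside `H` have a common blue neighbor in
`H` and each has at least 2 blue neighbors in `H`, then the union of their blue
neighborhoods in `H` has exactly 2 elements. -/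
theorem blue_nbhd_union_eq_two (R : SimpleGraph (Fin 14))
    (hred : ¬ ContainsCopy R (fanGraph 3)) (hblue : ¬ ContainsCopy Rᶜ (fanGraph 3))
    (H : Finset (Fin 14)) (hH : H.card = 5)
    (hK5 : ∀ a ∈ H, ∀ b ∈ H, a ≠ b → Rᶜ.Adj a b)
    (v₁ v₂ : Fin 14) (hv₁ : v₁ ∉ H) (hv₂ : v₂ ∉ H) (hne : v₁ ≠ v₂)
    (hcommon : 1 ≤ ({h : Fin 14 | h ∈ H ∧ Rᶜ.Adj v₁ h} ∩ {h : Fin 14 | h ∈ H ∧ Rᶜ.Adj v₂ h}).ncard)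
    (h₁ : 2 ≤ {h : Fin 14 | h ∈ H ∧ Rᶜ.Adj v₁ h}.ncard)
    (h₂ : 2 ≤ {h : Fin 14 | h ∈ H ∧ Rᶜ.Adj v₂ h}.ncard) :
    ({h : Fin 14 | h ∈ H ∧ Rᶜ.Adj v₁ h} ∪ {h : Fin 14 | h ∈ H ∧ Rᶜ.Adj v₂ h}).ncard = 2 :=
  blue_nbhd_union_eq_two_general R hblue H hH hK5 v₁ v₂ hv₁ hv₂ hne hcommon h₁ h₂
end
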